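/- arXiv:2112.09313 — 6 statements merged into one kernel-verified Lean document; each statement's English description precedes it below -/
import Mathlib

section
/- The bias of the augmented inverse-probability-weighted (AIPW) functional with working models (π, m₁, m₀) admits the product decomposition: E[ m₁(X) − m₀(X) + A·(Y−m₁(X))/π(X) − (1−A)·(Y−m₀(X))/(1−π(X)) ] − E[Y¹ − Y⁰] = E[ (e(X)/π(X) − 1)·(μ₁(X) − m₁(X)) ] − E[ ((1−e(X))/(1−π(X)) − 1)·(μ₀(X) − m₀(X)) ]. -/
/-!
Condition on `𝓖 = σ(X)`. Since `A (Y - μ₁(X))` has conditional mean zero and `E[A | 𝓖] = e(X)`,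
the augmentation term `A (Y - m₁(X)) / π(X)` has conditional mean `e(X) (μ₁(X) - m₁(X)) / π(X)`.
Ignorability and consistency give `e(X) E[Y¹ | 𝓖] = E[A Y¹ | 𝓖] = E[A Y | 𝓖] = e(X) μ₁(X)`, so
positivity identifies `E[Y¹ | 𝓖] = μ₁(X)`. Together, the treated arm of the AIPW functional has
bias `E[(e/π - 1)(μ₁ - m₁)]`; the control arm is the same computation with `A, e, π` replaced by
`1 - A, 1 - e, 1 - π`.
-/

open MeasureTheory ProbabilityTheory
open scoped ENNReal

section Arm

variable {Ω : Type*} {m m₀ : MeasurableSpace Ω} {P : Measure Ω} {T Y Y' μ g e w : Ω → ℝ}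

/-- The AIPW functional is `augmentedIPW m₁ π A Y - augmentedIPW m₀ (1 - π) (1 - A) Y`. -/
noncomputable def augmentedIPW (g w T Y : Ω → ℝ) : Ω → ℝ := g + T * (Y - g) / w

theorem memLp_top_of_abs_le [IsFiniteMeasure P] {f : Ω → ℝ} (hf : Measurable f) {C : ℝ}
    (hC : ∀ ω, |f ω| ≤ C) : MemLp f ∞ P :=
  memLp_top_of_bound hf.aestronglyMeasurable C (.of_forall hC)

theorem memLp_top_inv_of_le [IsFiniteMeasure P] {f : Ω → ℝ} (hf : Measurable f) {ε : ℝ}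
    (hε : 0 < ε) (hfε : ∀ ω, ε ≤ f ω) : MemLp f⁻¹ ∞ P :=
  memLp_top_of_abs_le hf.inv fun ω => by
    rw [Pi.inv_apply, abs_inv, abs_of_pos (hε.trans_le (hfε ω))]
    exact inv_anti₀ hε (hfε ω)

theorem memLp_augmentedIPW (hgb : MemLp g ∞ P) (hwb : MemLp w⁻¹ ∞ P) (hT : MemLp T ∞ P)
    (hY : MemLp Y ∞ P) : MemLp (augmentedIPW g w T Y) ∞ P := by
  have hTYg : MemLp (T * (Y - g)) ∞ P := (hY.sub hgb).mul hT
  rw [augmentedIPW, div_eq_mul_inv]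
  exact hgb.add (hwb.mul hTYg)

theorem condExp_one_sub [IsFiniteMeasure P] (hm : m ≤ m₀) (hT : Integrable T P)
    (hTe : P[T|m] =ᵐ[P] e) : P[fun ω => 1 - T ω|m] =ᵐ[P] fun ω => 1 - e ω := by
  filter_upwards [condExp_sub (integrable_const 1) hT m, hTe] with ω h h'
  rw [show (fun ω => 1 - T ω) = (fun _ => (1 : ℝ)) - T from rfl, h, Pi.sub_apply,
    condExp_const hm, h']

theorem condExp_mul_sub_eq_mul_sub [IsFiniteMeasure P] (hμ : StronglyMeasurable[m] μ)
    (hg : StronglyMeasurable[m] g) (hT : MemLp T ∞ P) (hY : MemLp Y ∞ P) (hμb : MemLp μ ∞ P)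
    (hgb : MemLp g ∞ P) (hTe : P[T|m] =ᵐ[P] e) (hres : P[T * (Y - μ)|m] =ᵐ[P] 0) :
    P[T * (Y - g)|m] =ᵐ[P] e * (μ - g) := by
  have hsplit : T * (Y - g) = T * (Y - μ) + (μ - g) * T := by ring
  have hpull : P[(μ - g) * T|m] =ᵐ[P] (μ - g) * P[T|m] :=
    condExp_mul_of_stronglyMeasurable_left (hμ.sub hg)
      ((hT.mul (hμb.sub hgb)).integrable le_top) (hT.integrable le_top)
  rw [hsplit]
  filter_upwards [condExp_add ((hY.sub hμb).mul hT |>.integrable le_top)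
    ((hT.mul (hμb.sub hgb)).integrable le_top) m, hres, hpull, hTe] with ω hadd h0 hmul he
  simp only [hadd, Pi.add_apply, h0, hmul, Pi.mul_apply, he, Pi.zero_apply, zero_add]
  ring

theorem condExp_augmentedIPW [IsFiniteMeasure P] (hm : m ≤ m₀) (hμ : StronglyMeasurable[m] μ)
    (hg : StronglyMeasurable[m] g) (hw : StronglyMeasurable[m] w) (hT : MemLp T ∞ P)
    (hY : MemLp Y ∞ P) (hμb : MemLp μ ∞ P) (hgb : MemLp g ∞ P) (hwb : MemLp w⁻¹ ∞ P)
    (hTe : P[T|m] =ᵐ[P] e) (hres : P[T * (Y - μ)|m] =ᵐ[P] 0) :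
    P[augmentedIPW g w T Y|m] =ᵐ[P] g + e * (μ - g) / w := by
  have hTYg : MemLp (T * (Y - g)) ∞ P := (hY.sub hgb).mul hT
  have hTYgw : MemLp (w⁻¹ * (T * (Y - g))) ∞ P := hTYg.mul hwb
  rw [augmentedIPW, div_eq_inv_mul]
  filter_upwards [condExp_add (hgb.integrable le_top) (hTYgw.integrable le_top) m,
    condExp_mul_of_stronglyMeasurable_left hw.measurable.inv.stronglyMeasurable
      (hTYgw.integrable le_top) (hTYg.integrable le_top),
    condExp_mul_sub_eq_mul_sub hμ hg hT hY hμb hgb hTe hres] with ω hadd hpull h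
  rw [hadd, Pi.add_apply, hpull, condExp_of_stronglyMeasurable hm hg (hgb.integrable le_top)]
  simp only [Pi.add_apply, Pi.mul_apply, Pi.inv_apply, h, Pi.div_apply]
  ring

theorem condExp_eq_of_condExp_mul_eq [IsFiniteMeasure P] (hμ : StronglyMeasurable[m] μ)
    (hT : MemLp T ∞ P) (hY : MemLp Y ∞ P) (hμb : MemLp μ ∞ P) (hTe : P[T|m] =ᵐ[P] e)
    (hres : P[T * (Y - μ)|m] =ᵐ[P] 0) (hTY : T * Y = T * Y')
    (hig : P[T * Y'|m] =ᵐ[P] e * P[Y'|m]) (he : ∀ᵐ ω ∂P, e ω ≠ 0) :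
    P[Y'|m] =ᵐ[P] μ := by
  have hTμ := condExp_mul_sub_eq_mul_sub (g := 0) hμ stronglyMeasurable_zero hT hY hμb
    (memLp_const 0) hTe hres
  rw [sub_zero, sub_zero, hTY] at hTμ
  filter_upwards [hig.symm.trans hTμ, he] with ω h hne
  exact mul_left_cancel₀ hne h

theorem integral_augmentedIPW_sub [IsFiniteMeasure P] (hm : m ≤ m₀)
    (hμ : StronglyMeasurable[m] μ) (hg : StronglyMeasurable[m] g) (hw : StronglyMeasurable[m] w)
    (hT : MemLp T ∞ P) (hY : MemLp Y ∞ P) (hμb : MemLp μ ∞ P) (hgb : MemLp g ∞ P)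
    (hwb : MemLp w⁻¹ ∞ P) (hTe : P[T|m] =ᵐ[P] e) (hres : P[T * (Y - μ)|m] =ᵐ[P] 0)
    (hTY : T * Y = T * Y') (hig : P[T * Y'|m] =ᵐ[P] e * P[Y'|m]) (he : ∀ᵐ ω ∂P, e ω ≠ 0) :
    ∫ ω, augmentedIPW g w T Y ω ∂P - ∫ ω, Y' ω ∂P = ∫ ω, (e ω / w ω - 1) * (μ ω - g ω) ∂P := by
  have hcond := condExp_augmentedIPW hm hμ hg hw hT hY hμb hgb hwb hTe hres
  have hY'μ := condExp_eq_of_condExp_mul_eq hμ hT hY hμb hTe hres hTY hig he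
  calc ∫ ω, augmentedIPW g w T Y ω ∂P - ∫ ω, Y' ω ∂P
      = ∫ ω, (g + e * (μ - g) / w) ω ∂P - ∫ ω, μ ω ∂P := by
        rw [← integral_condExp hm, integral_congr_ae hcond, ← integral_condExp hm (f := Y'),
          integral_congr_ae hY'μ]
    _ = ∫ ω, ((g + e * (μ - g) / w) ω - μ ω) ∂P :=
        (integral_sub (integrable_condExp.congr hcond) (hμb.integrable le_top)).symm
    _ = ∫ ω, (e ω / w ω - 1) * (μ ω - g ω) ∂P := by
        congr with ω
        simp only [Pi.add_apply, Pi.div_apply, Pi.mul_apply, Pi.sub_apply]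
        ring

end Arm

theorem aipw_bias_decomposition_general
    {Ω : Type*} [MeasurableSpace Ω] (P : Measure Ω) [IsProbabilityMeasure P]
    {p : ℕ} (X : Ω → (Fin p → ℝ)) (A : Ω → ℝ) (Y1 Y0 Y : Ω → ℝ)
    (e μ1 μ0 π m1 m0 : (Fin p → ℝ) → ℝ) (ε : ℝ)
    (hX : Measurable X) (hA : Measurable A) (hA01 : ∀ ω, A ω = 0 ∨ A ω = 1)
    (hY1 : Measurable Y1) (hY0 : Measurable Y0)
    (hY1b : ∃ C, ∀ ω, |Y1 ω| ≤ C) (hY0b : ∃ C, ∀ ω, |Y0 ω| ≤ C)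
    (hcons : ∀ ω, Y ω = A ω * Y1 ω + (1 - A ω) * Y0 ω)
    (heX : (fun ω => e (X ω)) =ᵐ[P] P[A | MeasurableSpace.comap X inferInstance])
    (hε : 0 < ε)
    (hpos : ∀ᵐ ω ∂P, ε ≤ e (X ω) ∧ e (X ω) ≤ 1 - ε)
    (hig1 : P[fun ω => A ω * Y1 ω | MeasurableSpace.comap X inferInstance]
      =ᵐ[P] fun ω => e (X ω) * (P[Y1 | MeasurableSpace.comap X inferInstance]) ω)
    (hig0 : P[fun ω => (1 - A ω) * Y0 ω | MeasurableSpace.comap X inferInstance]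
      =ᵐ[P] fun ω => (1 - e (X ω)) * (P[Y0 | MeasurableSpace.comap X inferInstance]) ω)
    (hμ1 : Measurable μ1) (hμ0 : Measurable μ0)
    (hμ1b : ∃ C, ∀ x, |μ1 x| ≤ C) (hμ0b : ∃ C, ∀ x, |μ0 x| ≤ C)
    (hor1 : P[fun ω => A ω * (Y ω - μ1 (X ω)) | MeasurableSpace.comap X inferInstance]
      =ᵐ[P] fun _ => (0 : ℝ))
    (hor0 : P[fun ω => (1 - A ω) * (Y ω - μ0 (X ω)) | MeasurableSpace.comap X inferInstance]
      =ᵐ[P] fun _ => (0 : ℝ))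
    (hπ : Measurable π) (hπpos : ∀ x, ε ≤ π x ∧ π x ≤ 1 - ε)
    (hm1 : Measurable m1) (hm0 : Measurable m0)
    (hm1b : ∃ C, ∀ x, |m1 x| ≤ C) (hm0b : ∃ C, ∀ x, |m0 x| ≤ C) :
    (∫ ω, (m1 (X ω) - m0 (X ω) + A ω * (Y ω - m1 (X ω)) / π (X ω)
          - (1 - A ω) * (Y ω - m0 (X ω)) / (1 - π (X ω))) ∂P)
        - ∫ ω, (Y1 ω - Y0 ω) ∂P
      = (∫ ω, (e (X ω) / π (X ω) - 1) * (μ1 (X ω) - m1 (X ω)) ∂P)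
        - ∫ ω, ((1 - e (X ω)) / (1 - π (X ω)) - 1) * (μ0 (X ω) - m0 (X ω)) ∂P := by
  obtain ⟨C1, hC1⟩ := hY1b
  obtain ⟨C0, hC0⟩ := hY0b
  have hG := hX.comap_le
  have hXG {f : (Fin p → ℝ) → ℝ} (hf : Measurable f) :
      StronglyMeasurable[MeasurableSpace.comap X inferInstance] fun ω => f (X ω) :=
    (hf.comp (comap_measurable X)).stronglyMeasurable
  have hXb {f : (Fin p → ℝ) → ℝ} (hf : Measurable f) (hb : ∃ C, ∀ x, |f x| ≤ C) :
      MemLp (fun ω => f (X ω)) ∞ P :=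
    hb.elim fun C hC => memLp_top_of_abs_le (hf.comp hX) fun ω => hC (X ω)
  have hY1m : MemLp Y1 ∞ P := memLp_top_of_abs_le hY1 hC1
  have hY0m : MemLp Y0 ∞ P := memLp_top_of_abs_le hY0 hC0
  have hAm : MemLp A ∞ P :=
    memLp_top_of_abs_le (C := 1) hA fun ω => by rcases hA01 ω with h | h <;> simp [h]
  have h1Am : MemLp (fun ω => 1 - A ω) ∞ P := (memLp_const 1).sub hAm
  have hYm : MemLp Y ∞ P := by
    rw [show Y = A * Y1 + (fun ω => 1 - A ω) * Y0 from funext hcons]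
    exact (hY1m.mul hAm).add (hY0m.mul h1Am)
  have hπm : MemLp (fun ω => π (X ω))⁻¹ ∞ P :=
    memLp_top_inv_of_le (hπ.comp hX) hε fun ω => (hπpos (X ω)).1
  have h1πm : MemLp (fun ω => 1 - π (X ω))⁻¹ ∞ P :=
    memLp_top_inv_of_le (measurable_const.sub (hπ.comp hX)) hε fun ω => by
      linarith [(hπpos (X ω)).2]
  have hA1 : A * Y = A * Y1 := funext fun ω => by rcases hA01 ω with h | h <;> simp [hcons ω, h]
  have hA0 : (fun ω => 1 - A ω) * Y = (fun ω => 1 - A ω) * Y0 :=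
    funext fun ω => by rcases hA01 ω with h | h <;> simp [hcons ω, h]
  have arm1 := integral_augmentedIPW_sub hG (hXG hμ1) (hXG hm1) (hXG hπ) hAm hYm
    (hXb hμ1 hμ1b) (hXb hm1 hm1b) hπm heX.symm hor1 hA1 hig1
    (hpos.mono fun ω h => by linarith [h.1])
  have arm0 := integral_augmentedIPW_sub hG (hXG hμ0) (hXG hm0) (hXG (measurable_const.sub hπ))
    h1Am hYm (hXb hμ0 hμ0b) (hXb hm0 hm0b) h1πm (condExp_one_sub hG (hAm.integrable le_top)
    heX.symm) hor0 hA0 hig0 (hpos.mono fun ω h => by linarith [h.2])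
  have haipw : (fun ω => m1 (X ω) - m0 (X ω) + A ω * (Y ω - m1 (X ω)) / π (X ω)
        - (1 - A ω) * (Y ω - m0 (X ω)) / (1 - π (X ω)))
      = fun ω => augmentedIPW (fun ω => m1 (X ω)) (fun ω => π (X ω)) A Y ω
        - augmentedIPW (fun ω => m0 (X ω)) (fun ω => 1 - π (X ω)) (fun ω => 1 - A ω) Y ω := by
    ext ω
    simp only [augmentedIPW, Pi.add_apply, Pi.sub_apply, Pi.mul_apply, Pi.div_apply]
    ring
  rw [haipw, integral_sub ((memLp_augmentedIPW (hXb hm1 hm1b) hπm hAm hYm).integrable le_top)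
      ((memLp_augmentedIPW (hXb hm0 hm0b) h1πm h1Am hYm).integrable le_top),
    integral_sub (hY1m.integrable le_top) (hY0m.integrable le_top)]
  linear_combination arm1 - arm0

/-- **Product bias decomposition of the AIPW functional.**
With working propensity score `π` and working outcome regressions `m₁, m₀`, the bias of the
augmented IPW functional for the ATE decomposes as a product of model errors:
`E[AIPW] − E[Y¹ − Y⁰] = E[(e/π − 1)(μ₁ − m₁)] − E[((1−e)/(1−π) − 1)(μ₀ − m₀)]`. -/
theorem aipw_bias_decomposition
    {Ω : Type*} [MeasurableSpace Ω] (P : Measure Ω) [IsProbabilityMeasure P]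
    {p : ℕ} (X : Ω → (Fin p → ℝ)) (A : Ω → ℝ) (Y1 Y0 Y : Ω → ℝ)
    (e μ1 μ0 π m1 m0 : (Fin p → ℝ) → ℝ) (ε : ℝ)
    (hX : Measurable X) (hA : Measurable A) (hA01 : ∀ ω, A ω = 0 ∨ A ω = 1)
    (hY1 : Measurable Y1) (hY0 : Measurable Y0)
    (hY1b : ∃ C, ∀ ω, |Y1 ω| ≤ C) (hY0b : ∃ C, ∀ ω, |Y0 ω| ≤ C)
    (hcons : ∀ ω, Y ω = A ω * Y1 ω + (1 - A ω) * Y0 ω)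
    (he : Measurable e)
    (heX : (fun ω => e (X ω)) =ᵐ[P] P[A | MeasurableSpace.comap X inferInstance])
    (hε : 0 < ε) (hε' : ε < 1 / 2)
    (hpos : ∀ᵐ ω ∂P, ε ≤ e (X ω) ∧ e (X ω) ≤ 1 - ε)
    (hig1 : P[fun ω => A ω * Y1 ω | MeasurableSpace.comap X inferInstance]
      =ᵐ[P] fun ω => e (X ω) * (P[Y1 | MeasurableSpace.comap X inferInstance]) ω)
    (hig0 : P[fun ω => (1 - A ω) * Y0 ω | MeasurableSpace.comap X inferInstance]
      =ᵐ[P] fun ω => (1 - e (X ω)) * (P[Y0 | MeasurableSpace.comap X inferInstance]) ω)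
    (hμ1 : Measurable μ1) (hμ0 : Measurable μ0)
    (hμ1b : ∃ C, ∀ x, |μ1 x| ≤ C) (hμ0b : ∃ C, ∀ x, |μ0 x| ≤ C)
    (hor1 : P[fun ω => A ω * (Y ω - μ1 (X ω)) | MeasurableSpace.comap X inferInstance]
      =ᵐ[P] fun _ => (0 : ℝ))
    (hor0 : P[fun ω => (1 - A ω) * (Y ω - μ0 (X ω)) | MeasurableSpace.comap X inferInstance]
      =ᵐ[P] fun _ => (0 : ℝ))
    (hπ : Measurable π) (hπpos : ∀ x, ε ≤ π x ∧ π x ≤ 1 - ε)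
    (hm1 : Measurable m1) (hm0 : Measurable m0)
    (hm1b : ∃ C, ∀ x, |m1 x| ≤ C) (hm0b : ∃ C, ∀ x, |m0 x| ≤ C) :
    (∫ ω, (m1 (X ω) - m0 (X ω) + A ω * (Y ω - m1 (X ω)) / π (X ω)
          - (1 - A ω) * (Y ω - m0 (X ω)) / (1 - π (X ω))) ∂P)
        - ∫ ω, (Y1 ω - Y0 ω) ∂P
      = (∫ ω, (e (X ω) / π (X ω) - 1) * (μ1 (X ω) - m1 (X ω)) ∂P)
        - ∫ ω, ((1 - e (X ω)) / (1 - π (X ω)) - 1) * (μ0 (X ω) - m0 (X ω)) ∂P :=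
  aipw_bias_decomposition_general P X A Y1 Y0 Y e μ1 μ0 π m1 m0 ε hX hA hA01 hY1 hY0 hY1b hY0b hcons
    heX hε hpos hig1 hig0 hμ1 hμ0 hμ1b hμ0b hor1 hor0 hπ hπpos hm1 hm0 hm1b hm0b
end

section
/- Double robustness of the AIPW functional: if either (i) π(X) = e(X) a.s., or (ii) m₁(X) = μ₁(X) and m₀(X) = μ₀(X) a.s., then E[ m₁(X) − m₀(X) + A·(Y−m₁(X))/π(X) − (1−A)·(Y−m₀(X))/(1−π(X)) ] = E[Y¹ − Y⁰]. -/
open MeasureTheory ProbabilityTheory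

/-!
Conditionally on `X`, an AIPW arm `r + W (Z - r) / q` has mean
`E[Z | X] + (E[Z | X] - r) (e - q) / q`: pull the `X`-measurable factors out of the
conditional expectation and use ignorability `E[W Z | X] = e E[Z | X]`. The bias is a product
of the regression error and the propensity error, so it vanishes as soon as either working model
is correct. When the working regressions are correct they must still be matched with `E[Z | X]`:
the orthogonality condition gives `e (E[Z | X] - μ) = 0`, and positivity cancels `e`. By
consistency the AIPW functional is the treated arm (`W = A`, `Z = Y¹`) minus the control arm
(`W = 1 - A`, `Z = Y⁰`).
-/

namespace AIPW

noncomputable def aipwArm {Ω : Type*} (W Z r q : Ω → ℝ) : Ω → ℝ :=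
  fun ω => r ω + W ω * (Z ω - r ω) / q ω

variable {Ω : Type*} {m mΩ : MeasurableSpace Ω} {P : Measure Ω}
  {W Z r q e μ : Ω → ℝ} {C ε : ℝ}

lemma aipwArm_eq (W Z r q : Ω → ℝ) :
    aipwArm W Z r q = r + q⁻¹ * (fun ω => W ω * Z ω) - (r / q) * W := by
  funext ω
  simp only [aipwArm, Pi.add_apply, Pi.sub_apply, Pi.mul_apply, Pi.div_apply, Pi.inv_apply]
  ring

lemma norm_inv_le_of_le (hε : 0 < ε) (hqε : ∀ ω, ε ≤ q ω) (ω : Ω) : ‖(q ω)⁻¹‖ ≤ ε⁻¹ := by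
  rw [norm_inv, Real.norm_of_nonneg (hε.le.trans (hqε ω))]
  exact inv_anti₀ hε (hqε ω)

lemma integrable_of_abs_le [IsFiniteMeasure P] (hr : Measurable r) (hrC : ∀ ω, |r ω| ≤ C) :
    Integrable r P :=
  .of_bound hr.aestronglyMeasurable C (.of_forall hrC)

lemma integrable_inv_mul (hq : Measurable q) (hε : 0 < ε) (hqε : ∀ ω, ε ≤ q ω)
    (hW : Integrable W P) : Integrable (q⁻¹ * W) P :=
  hW.bdd_mul hq.inv.aestronglyMeasurable (.of_forall (norm_inv_le_of_le hε hqε))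

lemma integrable_div_mul (hr : Measurable r) (hq : Measurable q) (hrC : ∀ ω, |r ω| ≤ C)
    (hε : 0 < ε) (hqε : ∀ ω, ε ≤ q ω) (hW : Integrable W P) : Integrable (r / q * W) P := by
  refine hW.bdd_mul (hr.div hq).aestronglyMeasurable (c := C * ε⁻¹) (.of_forall fun ω => ?_)
  rw [Pi.div_apply, div_eq_mul_inv, norm_mul]
  exact mul_le_mul (hrC ω) (norm_inv_le_of_le hε hqε ω) (norm_nonneg _)
    ((abs_nonneg _).trans (hrC ω))

lemma integrable_aipwArm [IsFiniteMeasure P] (hr : Measurable r) (hq : Measurable q)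
    (hrC : ∃ C, ∀ ω, |r ω| ≤ C) (hε : 0 < ε) (hqε : ∀ ω, ε ≤ q ω) (hW : Integrable W P)
    (hWZ : Integrable (fun ω => W ω * Z ω) P) : Integrable (aipwArm W Z r q) P := by
  obtain ⟨C, hrC⟩ := hrC
  rw [aipwArm_eq]
  exact ((integrable_of_abs_le hr hrC).add (integrable_inv_mul hq hε hqε hWZ)).sub
    (integrable_div_mul hr hq hrC hε hqε hW)

lemma condExp_aipwArm [IsFiniteMeasure P] (hm : m ≤ mΩ) (hr : Measurable[m] r)
    (hq : Measurable[m] q) (hrC : ∃ C, ∀ ω, |r ω| ≤ C) (hε : 0 < ε) (hqε : ∀ ω, ε ≤ q ω)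
    (hW : Integrable W P) (hWZ : Integrable (fun ω => W ω * Z ω) P)
    (heW : e =ᵐ[P] P[W | m]) (hig : P[fun ω => W ω * Z ω | m] =ᵐ[P] fun ω => e ω * P[Z | m] ω) :
    P[aipwArm W Z r q | m] =ᵐ[P]
      fun ω => P[Z | m] ω + (P[Z | m] ω - r ω) * (e ω - q ω) / q ω := by
  obtain ⟨C, hrC⟩ := hrC
  have hr' : Integrable r P := integrable_of_abs_le (hr.mono hm le_rfl) hrC
  have h1 := integrable_inv_mul (hq.mono hm le_rfl) hε hqε hWZ
  have h2 := integrable_div_mul (hr.mono hm le_rfl) (hq.mono hm le_rfl) hrC hε hqε hW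
  have hsplit := (condExp_sub (hr'.add h1) h2 m).trans ((condExp_add hr' h1 m).sub
    (condExp_mul_of_stronglyMeasurable_left (hr.div hq).stronglyMeasurable h2 hW))
  have hpull := condExp_mul_of_stronglyMeasurable_left (m := m) hq.inv.stronglyMeasurable h1 hWZ
  rw [condExp_of_stronglyMeasurable hm hr.stronglyMeasurable hr'] at hsplit
  rw [aipwArm_eq]
  filter_upwards [hsplit, hpull, heW, hig] with ω hs hp he hi
  have hq0 : q ω ≠ 0 := (hε.trans_le (hqε ω)).ne'
  simp only [Pi.add_apply, Pi.sub_apply, Pi.mul_apply, Pi.div_apply, Pi.inv_apply] at hs hp hi ⊢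
  rw [hs, hp, hi, he]
  field_simp
  ring

lemma condExp_ae_eq_of_condExp_mul_sub_ae_eq_zero [IsFiniteMeasure P] (hm : m ≤ mΩ)
    (hμ : Measurable[m] μ) (hμC : ∃ C, ∀ ω, |μ ω| ≤ C) (hW : Integrable W P)
    (hWZ : Integrable (fun ω => W ω * Z ω) P) (heW : e =ᵐ[P] P[W | m])
    (hig : P[fun ω => W ω * Z ω | m] =ᵐ[P] fun ω => e ω * P[Z | m] ω)
    (hor : P[fun ω => W ω * (Z ω - μ ω) | m] =ᵐ[P] fun _ => 0) (he : ∀ᵐ ω ∂P, e ω ≠ 0) :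
    P[Z | m] =ᵐ[P] μ := by
  obtain ⟨C, hμC⟩ := hμC
  have hμW : Integrable (μ * W) P :=
    hW.bdd_mul (hμ.mono hm le_rfl).aestronglyMeasurable
      (.of_forall fun ω => (Real.norm_eq_abs _).trans_le (hμC ω))
  have hsplit : (fun ω => W ω * (Z ω - μ ω)) = (fun ω => W ω * Z ω) - μ * W := by
    funext ω
    simp only [Pi.sub_apply, Pi.mul_apply]
    ring
  rw [hsplit] at hor
  filter_upwards [hor.symm.trans (condExp_sub hWZ hμW m), heW, hig,
    condExp_mul_of_stronglyMeasurable_left hμ.stronglyMeasurable hμW hW, he]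
    with ω hs he' hi hp hne
  simp only [Pi.sub_apply, Pi.mul_apply] at hs hp
  rw [hi, hp, ← he'] at hs
  have hprod : e ω * (P[Z | m] ω - μ ω) = 0 := by linarith
  exact sub_eq_zero.mp ((mul_eq_zero.mp hprod).resolve_left hne)

lemma integral_aipwArm_of_or [IsFiniteMeasure P] (hm : m ≤ mΩ) (hr : Measurable[m] r)
    (hq : Measurable[m] q) (hrC : ∃ C, ∀ ω, |r ω| ≤ C) (hε : 0 < ε) (hqε : ∀ ω, ε ≤ q ω)
    (hW : Integrable W P) (hWZ : Integrable (fun ω => W ω * Z ω) P)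
    (heW : e =ᵐ[P] P[W | m]) (hig : P[fun ω => W ω * Z ω | m] =ᵐ[P] fun ω => e ω * P[Z | m] ω)
    (hμ : Measurable[m] μ) (hμC : ∃ C, ∀ ω, |μ ω| ≤ C)
    (hor : P[fun ω => W ω * (Z ω - μ ω) | m] =ᵐ[P] fun _ => 0) (he : ∀ᵐ ω ∂P, e ω ≠ 0)
    (h : q =ᵐ[P] e ∨ r =ᵐ[P] μ) :
    ∫ ω, aipwArm W Z r q ω ∂P = ∫ ω, Z ω ∂P := by
  have hbias :
      (fun ω => P[Z | m] ω + (P[Z | m] ω - r ω) * (e ω - q ω) / q ω) =ᵐ[P] P[Z | m] := by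
    rcases h with h | h
    · filter_upwards [h] with ω hω
      simp [hω]
    · filter_upwards [h,
        condExp_ae_eq_of_condExp_mul_sub_ae_eq_zero hm hμ hμC hW hWZ heW hig hor he] with ω hω hZ
      simp [hω, hZ]
  calc ∫ ω, aipwArm W Z r q ω ∂P = ∫ ω, P[aipwArm W Z r q | m] ω ∂P :=
        (integral_condExp hm).symm
    _ = ∫ ω, P[Z | m] ω ∂P :=
      integral_congr_ae ((condExp_aipwArm hm hr hq hrC hε hqε hW hWZ heW hig).trans hbias)
    _ = ∫ ω, Z ω ∂P := integral_condExp hm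

lemma integrable_of_binary [IsFiniteMeasure P] (hW : Measurable W)
    (hW01 : ∀ ω, W ω = 0 ∨ W ω = 1) : Integrable W P :=
  integrable_of_abs_le (C := 1) hW fun ω => by rcases hW01 ω with h | h <;> simp [h]

lemma integrable_mul_of_binary (hW : Measurable W) (hW01 : ∀ ω, W ω = 0 ∨ W ω = 1)
    (hZ : Integrable Z P) : Integrable (fun ω => W ω * Z ω) P :=
  hZ.bdd_mul hW.aestronglyMeasurable
    (.of_forall fun ω => show ‖W ω‖ ≤ 1 by rcases hW01 ω with h | h <;> simp [h])

lemma condExp_one_sub [IsFiniteMeasure P] (hm : m ≤ mΩ) (hW : Integrable W P) :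
    P[fun ω => 1 - W ω | m] =ᵐ[P] fun ω => 1 - P[W | m] ω := by
  filter_upwards [condExp_sub (integrable_const 1) hW m] with ω h
  rw [← Pi.sub_def, h, Pi.sub_apply, condExp_const hm]

lemma mul_sub_eq_of_consistency {a y y₁ y₀ : ℝ} (ha : a = 0 ∨ a = 1)
    (hy : y = a * y₁ + (1 - a) * y₀) (c : ℝ) :
    a * (y - c) = a * (y₁ - c) ∧ (1 - a) * (y - c) = (1 - a) * (y₀ - c) := by
  subst hy
  rcases ha with rfl | rfl <;> constructor <;> ring

lemma aipw_eq_aipwArm_sub_aipwArm {A Y Y₁ Y₀ : Ω → ℝ} (hA01 : ∀ ω, A ω = 0 ∨ A ω = 1)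
    (hcons : ∀ ω, Y ω = A ω * Y₁ ω + (1 - A ω) * Y₀ ω) (r₁ r₀ q : Ω → ℝ) :
    (fun ω => r₁ ω - r₀ ω + A ω * (Y ω - r₁ ω) / q ω - (1 - A ω) * (Y ω - r₀ ω) / (1 - q ω))
      = fun ω => aipwArm A Y₁ r₁ q ω - aipwArm (fun ω => 1 - A ω) Y₀ r₀ (fun ω => 1 - q ω) ω := by
  funext ω
  rw [(mul_sub_eq_of_consistency (hA01 ω) (hcons ω) _).1,
    (mul_sub_eq_of_consistency (hA01 ω) (hcons ω) _).2]
  simp only [aipwArm]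
  ring

end AIPW

open AIPW

theorem aipw_double_robustness_general
    {Ω : Type*} [MeasurableSpace Ω] (P : Measure Ω) [IsProbabilityMeasure P]
    {p : ℕ} (X : Ω → (Fin p → ℝ)) (A : Ω → ℝ) (Y1 Y0 Y : Ω → ℝ)
    (e μ1 μ0 π m1 m0 : (Fin p → ℝ) → ℝ) (ε : ℝ)
    (hX : Measurable X) (hA : Measurable A) (hA01 : ∀ ω, A ω = 0 ∨ A ω = 1)
    (hY1 : Measurable Y1) (hY0 : Measurable Y0)
    (hY1b : ∃ C, ∀ ω, |Y1 ω| ≤ C) (hY0b : ∃ C, ∀ ω, |Y0 ω| ≤ C)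
    (hcons : ∀ ω, Y ω = A ω * Y1 ω + (1 - A ω) * Y0 ω)
    (heX : (fun ω => e (X ω)) =ᵐ[P] P[A | MeasurableSpace.comap X inferInstance])
    (hε : 0 < ε)
    (hpos : ∀ᵐ ω ∂P, ε ≤ e (X ω) ∧ e (X ω) ≤ 1 - ε)
    (hig1 : P[fun ω => A ω * Y1 ω | MeasurableSpace.comap X inferInstance]
      =ᵐ[P] fun ω => e (X ω) * (P[Y1 | MeasurableSpace.comap X inferInstance]) ω)
    (hig0 : P[fun ω => (1 - A ω) * Y0 ω | MeasurableSpace.comap X inferInstance]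
      =ᵐ[P] fun ω => (1 - e (X ω)) * (P[Y0 | MeasurableSpace.comap X inferInstance]) ω)
    (hμ1 : Measurable μ1) (hμ0 : Measurable μ0)
    (hμ1b : ∃ C, ∀ x, |μ1 x| ≤ C) (hμ0b : ∃ C, ∀ x, |μ0 x| ≤ C)
    (hor1 : P[fun ω => A ω * (Y ω - μ1 (X ω)) | MeasurableSpace.comap X inferInstance]
      =ᵐ[P] fun _ => (0 : ℝ))
    (hor0 : P[fun ω => (1 - A ω) * (Y ω - μ0 (X ω)) | MeasurableSpace.comap X inferInstance]
      =ᵐ[P] fun _ => (0 : ℝ))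
    (hπ : Measurable π) (hπpos : ∀ x, ε ≤ π x ∧ π x ≤ 1 - ε)
    (hm1 : Measurable m1) (hm0 : Measurable m0)
    (hm1b : ∃ C, ∀ x, |m1 x| ≤ C) (hm0b : ∃ C, ∀ x, |m0 x| ≤ C)
    (hdr : ((fun ω => π (X ω)) =ᵐ[P] fun ω => e (X ω))
      ∨ (((fun ω => m1 (X ω)) =ᵐ[P] fun ω => μ1 (X ω))
          ∧ ((fun ω => m0 (X ω)) =ᵐ[P] fun ω => μ0 (X ω)))) :
    ∫ ω, (m1 (X ω) - m0 (X ω) + A ω * (Y ω - m1 (X ω)) / π (X ω)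
          - (1 - A ω) * (Y ω - m0 (X ω)) / (1 - π (X ω))) ∂P
      = ∫ ω, (Y1 ω - Y0 ω) ∂P := by
  have hG : MeasurableSpace.comap X inferInstance ≤ ‹MeasurableSpace Ω› := hX.comap_le
  have hXG : Measurable[MeasurableSpace.comap X inferInstance] X := comap_measurable X
  have hA01' : ∀ ω, 1 - A ω = 0 ∨ 1 - A ω = 1 := fun ω => by
    rcases hA01 ω with h | h <;> simp [h]
  have hπ1 : ∀ ω, ε ≤ π (X ω) := fun ω => (hπpos (X ω)).1
  have hπ0 : ∀ ω, ε ≤ 1 - π (X ω) := fun ω => by linarith [(hπpos (X ω)).2]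
  have intY1 : Integrable Y1 P := hY1b.elim fun _ => integrable_of_abs_le hY1
  have intY0 : Integrable Y0 P := hY0b.elim fun _ => integrable_of_abs_le hY0
  have intA := integrable_of_binary (P := P) hA hA01
  have intA' : Integrable (fun ω => 1 - A ω) P :=
    integrable_of_binary (measurable_const.sub hA) hA01'
  have intAY1 := integrable_mul_of_binary hA hA01 intY1
  have intAY0 : Integrable (fun ω => (1 - A ω) * Y0 ω) P :=
    integrable_mul_of_binary (measurable_const.sub hA) hA01' intY0
  have heX0 : (fun ω => 1 - e (X ω)) =ᵐ[P]
      P[fun ω => 1 - A ω | MeasurableSpace.comap X inferInstance] := by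
    filter_upwards [heX, condExp_one_sub hG intA] with ω h1 h2
    rw [h1, h2]
  rw [funext fun ω => (mul_sub_eq_of_consistency (hA01 ω) (hcons ω) _).1] at hor1
  rw [funext fun ω => (mul_sub_eq_of_consistency (hA01 ω) (hcons ω) _).2] at hor0
  have hm1X := hm1b.imp fun _ h ω => h (X ω)
  have hm0X := hm0b.imp fun _ h ω => h (X ω)
  have arm1 := integral_aipwArm_of_or (r := fun ω => m1 (X ω)) (q := fun ω => π (X ω))
    (μ := fun ω => μ1 (X ω)) hG (hm1.comp hXG) (hπ.comp hXG) hm1X hε hπ1 intA intAY1 heX hig1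
    (hμ1.comp hXG) (hμ1b.imp fun _ h ω => h (X ω)) hor1
    (hpos.mono fun ω h => (hε.trans_le h.1).ne') (hdr.imp id And.left)
  have arm0 := integral_aipwArm_of_or (r := fun ω => m0 (X ω)) (q := fun ω => 1 - π (X ω))
    (μ := fun ω => μ0 (X ω)) hG (hm0.comp hXG) (measurable_const.sub (hπ.comp hXG)) hm0X hε hπ0
    intA' intAY0 heX0 hig0 (hμ0.comp hXG) (hμ0b.imp fun _ h ω => h (X ω)) hor0
    (hpos.mono fun ω h => by linarith [h.2])
    (hdr.imp (fun h => h.mono fun ω hω => congrArg (1 - ·) hω) And.right)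
  have int1 := integrable_aipwArm (r := fun ω => m1 (X ω)) (q := fun ω => π (X ω))
    (hm1.comp hX) (hπ.comp hX) hm1X hε hπ1 intA intAY1
  have int0 := integrable_aipwArm (r := fun ω => m0 (X ω)) (q := fun ω => 1 - π (X ω))
    (hm0.comp hX) (measurable_const.sub (hπ.comp hX)) hm0X hε hπ0 intA' intAY0
  rw [aipw_eq_aipwArm_sub_aipwArm hA01 hcons (fun ω => m1 (X ω)) (fun ω => m0 (X ω)),
    integral_sub int1 int0, arm1, arm0, integral_sub intY1 intY0]

/-- **Double robustness of the AIPW functional.**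
If either the working propensity score is correct (`π(X) = e(X)` a.s.) or the working outcome
regressions are correct (`m₁(X) = μ₁(X)` and `m₀(X) = μ₀(X)` a.s.), then the augmented IPW
functional identifies the ATE: `E[AIPW] = E[Y¹ − Y⁰]`. -/
theorem aipw_double_robustness
    {Ω : Type*} [MeasurableSpace Ω] (P : Measure Ω) [IsProbabilityMeasure P]
    {p : ℕ} (X : Ω → (Fin p → ℝ)) (A : Ω → ℝ) (Y1 Y0 Y : Ω → ℝ)
    (e μ1 μ0 π m1 m0 : (Fin p → ℝ) → ℝ) (ε : ℝ)
    (hX : Measurable X) (hA : Measurable A) (hA01 : ∀ ω, A ω = 0 ∨ A ω = 1)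
    (hY1 : Measurable Y1) (hY0 : Measurable Y0)
    (hY1b : ∃ C, ∀ ω, |Y1 ω| ≤ C) (hY0b : ∃ C, ∀ ω, |Y0 ω| ≤ C)
    (hcons : ∀ ω, Y ω = A ω * Y1 ω + (1 - A ω) * Y0 ω)
    (he : Measurable e)
    (heX : (fun ω => e (X ω)) =ᵐ[P] P[A | MeasurableSpace.comap X inferInstance])
    (hε : 0 < ε) (hε' : ε < 1 / 2)
    (hpos : ∀ᵐ ω ∂P, ε ≤ e (X ω) ∧ e (X ω) ≤ 1 - ε)
    (hig1 : P[fun ω => A ω * Y1 ω | MeasurableSpace.comap X inferInstance]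
      =ᵐ[P] fun ω => e (X ω) * (P[Y1 | MeasurableSpace.comap X inferInstance]) ω)
    (hig0 : P[fun ω => (1 - A ω) * Y0 ω | MeasurableSpace.comap X inferInstance]
      =ᵐ[P] fun ω => (1 - e (X ω)) * (P[Y0 | MeasurableSpace.comap X inferInstance]) ω)
    (hμ1 : Measurable μ1) (hμ0 : Measurable μ0)
    (hμ1b : ∃ C, ∀ x, |μ1 x| ≤ C) (hμ0b : ∃ C, ∀ x, |μ0 x| ≤ C)
    (hor1 : P[fun ω => A ω * (Y ω - μ1 (X ω)) | MeasurableSpace.comap X inferInstance]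
      =ᵐ[P] fun _ => (0 : ℝ))
    (hor0 : P[fun ω => (1 - A ω) * (Y ω - μ0 (X ω)) | MeasurableSpace.comap X inferInstance]
      =ᵐ[P] fun _ => (0 : ℝ))
    (hπ : Measurable π) (hπpos : ∀ x, ε ≤ π x ∧ π x ≤ 1 - ε)
    (hm1 : Measurable m1) (hm0 : Measurable m0)
    (hm1b : ∃ C, ∀ x, |m1 x| ≤ C) (hm0b : ∃ C, ∀ x, |m0 x| ≤ C)
    (hdr : ((fun ω => π (X ω)) =ᵐ[P] fun ω => e (X ω))
      ∨ (((fun ω => m1 (X ω)) =ᵐ[P] fun ω => μ1 (X ω))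
          ∧ ((fun ω => m0 (X ω)) =ᵐ[P] fun ω => μ0 (X ω)))) :
    ∫ ω, (m1 (X ω) - m0 (X ω) + A ω * (Y ω - m1 (X ω)) / π (X ω)
          - (1 - A ω) * (Y ω - m0 (X ω)) / (1 - π (X ω))) ∂P
      = ∫ ω, (Y1 ω - Y0 ω) ∂P :=
  aipw_double_robustness_general P X A Y1 Y0 Y e μ1 μ0 π m1 m0 ε hX hA hA01 hY1 hY0 hY1b hY0b hcons
    heX hε hpos hig1 hig0 hμ1 hμ0 hμ1b hμ0b hor1 hor0 hπ hπpos hm1 hm0 hm1b hm0b hdr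
end

section
/- Mix-and-match double robustness of the site-stratified target estimator: suppose that for every target site k ∈ T, either (i) π_k(X) = e_k(X) a.e. under the law of X given R = k, or (ii) m_{1,k}(X) = μ_{1,k}(X) and m_{0,k}(X) = μ_{0,k}(X) a.e. under the law of X given R = k (the correct alternative may differ across sites). Then the weighted site-stratified AIPW functional identifies the target average treatment effect: Σ_{k∈T} (P(R=k)/P(R∈T)) · E_k[ m_{1,k}(X) − m_{0,k}(X) + A·(Y−m_{1,k}(X))/π_k(X) − (1−A)·(Y−m_{0,k}(X))/(1−π_k(X)) ] = E[Y¹ − Y⁰ ∣ R ∈ T], where E_k denotes expectation under the conditional probability P(· ∣ R = k). -/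
/-!
Fix a site and condition on `X`. Pulling the `X`-measurable factors `1/π` and `m₁` out of the
conditional expectation, and using `E[A Y¹ | X] = e E[Y¹ | X]`, the treated-arm term
`m₁ + A (Y − m₁)/π` has mean `E[Y¹] + E[(e − π)/π · (E[Y¹ | X] − m₁)]`; the control arm is the
same computation with `1 − A`, `1 − e`, `1 − π`. The bias is a product of the propensity error and
the outcome-regression error, so it vanishes as soon as one of the two models is correct (a
correct outcome model gives `E[Y¹ | X] = μ₁` because `e` is bounded away from `0`). The weights
`P(R = k)/P(R ∈ T)` then recombine the site effects by the law of total expectation over the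
partition `{R = k}`, `k ∈ T`.
-/

open MeasureTheory ProbabilityTheory

section AIPW

variable {Ω : Type*} {m mΩ : MeasurableSpace Ω} {μ : Measure Ω}

lemma integrable_of_exists_abs_le [IsFiniteMeasure μ] {f : Ω → ℝ}
    (hf : AEStronglyMeasurable f μ) (hb : ∃ C, ∀ ω, |f ω| ≤ C) : Integrable f μ :=
  let ⟨C, hC⟩ := hb
  Integrable.of_bound hf C (ae_of_all _ hC)

lemma integrable_ipw {W Z g π : Ω → ℝ} {ε : ℝ} (hε : 0 < ε)
    (hW : AEStronglyMeasurable W μ) (hW1 : ∀ ω, |W ω| ≤ 1) (hZ : Integrable Z μ)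
    (hg : Integrable g μ) (hπ : AEStronglyMeasurable π μ) (hπε : ∀ ω, ε ≤ π ω) :
    Integrable (fun ω => W ω * (Z ω - g ω) / π ω) μ := by
  have hq : Integrable (fun ω => W ω * (Z ω - g ω)) μ :=
    (hZ.sub hg).bdd_mul hW (ae_of_all _ hW1)
  have hπinv : ∀ ω, ‖(π ω)⁻¹‖ ≤ ε⁻¹ := fun ω => by
    rw [norm_inv, Real.norm_of_nonneg (hε.trans_le (hπε ω)).le]
    exact inv_anti₀ hε (hπε ω)
  simpa only [div_eq_inv_mul] using
    hq.bdd_mul (f := fun ω => (π ω)⁻¹) hπ.aemeasurable.inv.aestronglyMeasurable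
      (ae_of_all _ hπinv)

lemma condExp_mul_sub_of_stronglyMeasurable {W Z f e : Ω → ℝ} (hf : StronglyMeasurable[m] f)
    (hW : Integrable W μ) (hWZ : Integrable (W * Z) μ) (hfW : Integrable (f * W) μ)
    (he : e =ᵐ[μ] μ[W | m]) (hig : μ[W * Z | m] =ᵐ[μ] e * μ[Z | m]) :
    μ[W * (Z - f) | m] =ᵐ[μ] e * (μ[Z | m] - f) := by
  have hsplit : W * (Z - f) = W * Z - f * W := by ring
  rw [hsplit]
  filter_upwards [condExp_sub hWZ hfW m, hig, condExp_mul_of_stronglyMeasurable_left hf hfW hW,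
    he] with ω hsub hWZω hfWω heω
  simp only [hsub, Pi.sub_apply, hWZω, hfWω, Pi.mul_apply, heω]
  ring

lemma condExp_eq_of_condExp_mul_sub_eq_zero {W Z h e : Ω → ℝ} (hh : StronglyMeasurable[m] h)
    (hW : Integrable W μ) (hWZ : Integrable (W * Z) μ) (hhW : Integrable (h * W) μ)
    (he : e =ᵐ[μ] μ[W | m]) (he0 : ∀ᵐ ω ∂μ, e ω ≠ 0) (hig : μ[W * Z | m] =ᵐ[μ] e * μ[Z | m])
    (hor : μ[W * (Z - h) | m] =ᵐ[μ] 0) :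
    μ[Z | m] =ᵐ[μ] h := by
  filter_upwards [(condExp_mul_sub_of_stronglyMeasurable hh hW hWZ hhW he hig).symm.trans hor,
    he0] with ω hω he0ω
  exact sub_eq_zero.1 ((mul_eq_zero.1 hω).resolve_left he0ω)

lemma integral_aipw_sub_integral (hm : m ≤ mΩ) [SigmaFinite (μ.trim hm)]
    {W Z e g π : Ω → ℝ} (hπ : StronglyMeasurable[m] π) (hπ0 : ∀ᵐ ω ∂μ, π ω ≠ 0)
    (hg : Integrable g μ) (hq : Integrable (W * (Z - g)) μ)
    (hipw : Integrable (fun ω => W ω * (Z ω - g ω) / π ω) μ)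
    (hcond : μ[W * (Z - g) | m] =ᵐ[μ] e * (μ[Z | m] - g)) :
    ∫ ω, (g ω + W ω * (Z ω - g ω) / π ω) ∂μ - ∫ ω, Z ω ∂μ
      = ∫ ω, (e ω - π ω) / π ω * (μ[Z | m] ω - g ω) ∂μ := by
  have hdiv : (fun ω => W ω * (Z ω - g ω) / π ω) = π⁻¹ * (W * (Z - g)) :=
    funext fun ω => div_eq_inv_mul _ _
  have hipw' : Integrable (π⁻¹ * (W * (Z - g))) μ := hdiv ▸ hipw
  have hpull : μ[π⁻¹ * (W * (Z - g)) | m]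
      =ᵐ[μ] fun ω => (π ω)⁻¹ * e ω * (μ[Z | m] ω - g ω) := by
    filter_upwards [condExp_mul_of_stronglyMeasurable_left
      hπ.measurable.inv.stronglyMeasurable hipw' hq, hcond] with ω h1 h2
    rw [h1, Pi.mul_apply, h2, Pi.inv_apply, Pi.mul_apply, Pi.sub_apply, mul_assoc]
  have hipw_eq : ∫ ω, W ω * (Z ω - g ω) / π ω ∂μ
      = ∫ ω, (π ω)⁻¹ * e ω * (μ[Z | m] ω - g ω) ∂μ := by
    rw [integral_congr_ae (ae_of_all μ (congrFun hdiv)), ← integral_condExp hm]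
    exact integral_congr_ae hpull
  have hres : Integrable (fun ω => μ[Z | m] ω - g ω) μ := integrable_condExp.sub hg
  have hbias : (fun ω => (e ω - π ω) / π ω * (μ[Z | m] ω - g ω))
      =ᵐ[μ] fun ω => (π ω)⁻¹ * e ω * (μ[Z | m] ω - g ω) - (μ[Z | m] ω - g ω) := by
    filter_upwards [hπ0] with ω hω
    field_simp
  rw [integral_congr_ae hbias, integral_sub (integrable_condExp.congr hpull) hres,
    integral_sub integrable_condExp hg, integral_add hg hipw, hipw_eq, integral_condExp hm]
  ring

lemma integral_aipw_eq_of_or (hm : m ≤ mΩ) [SigmaFinite (μ.trim hm)]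
    {W Z e g π : Ω → ℝ} (hπ : StronglyMeasurable[m] π) (hπ0 : ∀ᵐ ω ∂μ, π ω ≠ 0)
    (hg : Integrable g μ) (hq : Integrable (W * (Z - g)) μ)
    (hipw : Integrable (fun ω => W ω * (Z ω - g ω) / π ω) μ)
    (hcond : μ[W * (Z - g) | m] =ᵐ[μ] e * (μ[Z | m] - g))
    (hdr : π =ᵐ[μ] e ∨ μ[Z | m] =ᵐ[μ] g) :
    ∫ ω, (g ω + W ω * (Z ω - g ω) / π ω) ∂μ = ∫ ω, Z ω ∂μ := by
  rw [← sub_eq_zero, integral_aipw_sub_integral hm hπ hπ0 hg hq hipw hcond]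
  refine integral_eq_zero_of_ae ?_
  rcases hdr with hπe | hZg
  · filter_upwards [hπe] with ω hω
    simp [hω]
  · filter_upwards [hZg] with ω hω
    simp [hω]

lemma integral_aipw_arm_eq (hm : m ≤ mΩ) [IsFiniteMeasure μ] {W Z e g h π : Ω → ℝ}
    {ε : ℝ} (hε : 0 < ε) (hW : AEStronglyMeasurable W μ) (hW1 : ∀ ω, |W ω| ≤ 1)
    (hZ : Integrable Z μ) (hg : StronglyMeasurable[m] g) (hgi : Integrable g μ)
    (hh : StronglyMeasurable[m] h) (hhi : Integrable h μ)
    (hπ : StronglyMeasurable[m] π) (hπε : ∀ ω, ε ≤ π ω)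
    (he : e =ᵐ[μ] μ[W | m]) (he0 : ∀ᵐ ω ∂μ, e ω ≠ 0)
    (hig : μ[W * Z | m] =ᵐ[μ] e * μ[Z | m])
    (hor : μ[W * (Z - h) | m] =ᵐ[μ] 0) (hdr : π =ᵐ[μ] e ∨ g =ᵐ[μ] h) :
    ∫ ω, (g ω + W ω * (Z ω - g ω) / π ω) ∂μ = ∫ ω, Z ω ∂μ := by
  have hW1' : ∀ᵐ ω ∂μ, ‖W ω‖ ≤ 1 := ae_of_all _ hW1
  have hWi : Integrable W μ := Integrable.of_bound hW 1 hW1'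
  have hWZ : Integrable (W * Z) μ := hZ.bdd_mul hW hW1'
  have hcond := condExp_mul_sub_of_stronglyMeasurable hg hWi hWZ (hgi.mul_bdd hW hW1') he hig
  have hZh :=
    condExp_eq_of_condExp_mul_sub_eq_zero hh hWi hWZ (hhi.mul_bdd hW hW1') he he0 hig hor
  refine integral_aipw_eq_of_or hm hπ (ae_of_all _ fun ω => (hε.trans_le (hπε ω)).ne') hgi
    ((hZ.sub hgi).bdd_mul hW hW1')
    (integrable_ipw hε hW hW1 hZ hgi (hπ.mono hm).aestronglyMeasurable hπε) hcond ?_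
  exact hdr.imp id fun hgh => hZh.trans hgh.symm

end AIPW

lemma integral_aipw_arm_comap_eq {Ω α : Type*} [MeasurableSpace Ω] [MeasurableSpace α]
    {ν : Measure Ω} [IsFiniteMeasure ν] {X : Ω → α} (hX : Measurable X) {W Z : Ω → ℝ}
    {e h π g : α → ℝ} {ε : ℝ} (hε : 0 < ε) (hW : Measurable W) (hW1 : ∀ ω, |W ω| ≤ 1)
    (hZ : Measurable Z) (hZb : ∃ C, ∀ ω, |Z ω| ≤ C)
    (he : (fun ω => e (X ω)) =ᵐ[ν] ν[W | MeasurableSpace.comap X inferInstance])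
    (he0 : ∀ᵐ ω ∂ν, e (X ω) ≠ 0)
    (hig : ν[fun ω => W ω * Z ω | MeasurableSpace.comap X inferInstance]
      =ᵐ[ν] fun ω => e (X ω) * (ν[Z | MeasurableSpace.comap X inferInstance]) ω)
    (hh : Measurable h) (hhb : ∃ C, ∀ x, |h x| ≤ C)
    (hor : ν[fun ω => W ω * (Z ω - h (X ω)) | MeasurableSpace.comap X inferInstance]
      =ᵐ[ν] fun _ => (0 : ℝ))
    (hπ : Measurable π) (hπε : ∀ x, ε ≤ π x) (hg : Measurable g) (hgb : ∃ C, ∀ x, |g x| ≤ C)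
    (hdr : (∀ᵐ ω ∂ν, π (X ω) = e (X ω)) ∨ ∀ᵐ ω ∂ν, g (X ω) = h (X ω)) :
    Integrable (fun ω => g (X ω) + W ω * (Z ω - g (X ω)) / π (X ω)) ν ∧
      ∫ ω, (g (X ω) + W ω * (Z ω - g (X ω)) / π (X ω)) ∂ν = ∫ ω, Z ω ∂ν := by
  have hXG {f : α → ℝ} (hf : Measurable f) :
      StronglyMeasurable[MeasurableSpace.comap X inferInstance] fun ω => f (X ω) :=
    (hf.comp (comap_measurable X)).stronglyMeasurable
  have hXi {f : α → ℝ} (hf : Measurable f) (hb : ∃ C, ∀ x, |f x| ≤ C) :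
      Integrable (fun ω => f (X ω)) ν :=
    integrable_of_exists_abs_le (hf.comp hX).aestronglyMeasurable
      (hb.imp fun C hC ω => hC (X ω))
  have hZi : Integrable Z ν := integrable_of_exists_abs_le hZ.aestronglyMeasurable hZb
  refine ⟨(hXi hg hgb).add <| integrable_ipw hε hW.aestronglyMeasurable hW1 hZi (hXi hg hgb)
    (hπ.comp hX).aestronglyMeasurable fun ω => hπε (X ω), ?_⟩
  exact integral_aipw_arm_eq hX.comap_le hε hW.aestronglyMeasurable hW1 hZi (hXG hg)
    (hXi hg hgb) (hXG hh) (hXi hh hhb) (hXG hπ) (fun ω => hπε (X ω)) he he0 hig hor hdr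

theorem integral_aipw_eq_integral_sub_of_or {Ω α : Type*} [MeasurableSpace Ω]
    [MeasurableSpace α] {ν : Measure Ω} [IsFiniteMeasure ν] {X : Ω → α} {A Y1 Y0 Y : Ω → ℝ}
    {e μ1 μ0 π m1 m0 : α → ℝ} {ε : ℝ} (hε : 0 < ε)
    (hX : Measurable X) (hA : Measurable A) (hA01 : ∀ ω, A ω = 0 ∨ A ω = 1)
    (hY1 : Measurable Y1) (hY0 : Measurable Y0)
    (hY1b : ∃ C, ∀ ω, |Y1 ω| ≤ C) (hY0b : ∃ C, ∀ ω, |Y0 ω| ≤ C)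
    (hcons : ∀ ω, Y ω = A ω * Y1 ω + (1 - A ω) * Y0 ω)
    (heX : (fun ω => e (X ω)) =ᵐ[ν] ν[A | MeasurableSpace.comap X inferInstance])
    (hpos : ∀ᵐ ω ∂ν, ε ≤ e (X ω) ∧ e (X ω) ≤ 1 - ε)
    (hig1 : ν[fun ω => A ω * Y1 ω | MeasurableSpace.comap X inferInstance]
      =ᵐ[ν] fun ω => e (X ω) * (ν[Y1 | MeasurableSpace.comap X inferInstance]) ω)
    (hig0 : ν[fun ω => (1 - A ω) * Y0 ω | MeasurableSpace.comap X inferInstance]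
      =ᵐ[ν] fun ω => (1 - e (X ω)) * (ν[Y0 | MeasurableSpace.comap X inferInstance]) ω)
    (hμ1 : Measurable μ1) (hμ0 : Measurable μ0)
    (hμ1b : ∃ C, ∀ x, |μ1 x| ≤ C) (hμ0b : ∃ C, ∀ x, |μ0 x| ≤ C)
    (hor1 : ν[fun ω => A ω * (Y ω - μ1 (X ω)) | MeasurableSpace.comap X inferInstance]
      =ᵐ[ν] fun _ => (0 : ℝ))
    (hor0 : ν[fun ω => (1 - A ω) * (Y ω - μ0 (X ω)) | MeasurableSpace.comap X inferInstance]
      =ᵐ[ν] fun _ => (0 : ℝ))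
    (hπ : Measurable π) (hπpos : ∀ x, ε ≤ π x ∧ π x ≤ 1 - ε)
    (hm1 : Measurable m1) (hm0 : Measurable m0)
    (hm1b : ∃ C, ∀ x, |m1 x| ≤ C) (hm0b : ∃ C, ∀ x, |m0 x| ≤ C)
    (hdr : (∀ᵐ ω ∂ν, π (X ω) = e (X ω))
      ∨ ((∀ᵐ ω ∂ν, m1 (X ω) = μ1 (X ω)) ∧ ∀ᵐ ω ∂ν, m0 (X ω) = μ0 (X ω))) :
    ∫ ω, (m1 (X ω) - m0 (X ω) + A ω * (Y ω - m1 (X ω)) / π (X ω)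
        - (1 - A ω) * (Y ω - m0 (X ω)) / (1 - π (X ω))) ∂ν
      = ∫ ω, (Y1 ω - Y0 ω) ∂ν := by
  have hA1 (ω : Ω) : |A ω| ≤ 1 := by rcases hA01 ω with h | h <;> simp [h]
  have h1A1 (ω : Ω) : |1 - A ω| ≤ 1 := by rcases hA01 ω with h | h <;> simp [h]
  have hAY1 (ω : Ω) (c : ℝ) : A ω * (Y ω - c) = A ω * (Y1 ω - c) := by
    rcases hA01 ω with h | h <;> simp [hcons, h]
  have hAY0 (ω : Ω) (c : ℝ) : (1 - A ω) * (Y ω - c) = (1 - A ω) * (Y0 ω - c) := by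
    rcases hA01 ω with h | h <;> simp [hcons, h]
  have heX0 : (fun ω => 1 - e (X ω))
      =ᵐ[ν] ν[fun ω => 1 - A ω | MeasurableSpace.comap X inferInstance] := by
    filter_upwards [heX, condExp_sub (integrable_const 1)
      (integrable_of_exists_abs_le hA.aestronglyMeasurable ⟨1, hA1⟩) _] with ω h1 h2
    rw [show (fun ω => 1 - A ω) = (fun _ => (1 : ℝ)) - A from rfl, h2, Pi.sub_apply,
      condExp_const hX.comap_le, h1]
  obtain ⟨int1, arm1⟩ := integral_aipw_arm_comap_eq hX hε hA hA1 hY1 hY1b heX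
    (hpos.mono fun ω h => (hε.trans_le h.1).ne') hig1 hμ1 hμ1b (by simpa only [hAY1] using hor1)
    hπ (fun x => (hπpos x).1) hm1 hm1b (hdr.imp id And.left)
  obtain ⟨int0, arm0⟩ := integral_aipw_arm_comap_eq (W := fun ω => 1 - A ω)
    (e := fun x => 1 - e x) (π := fun x => 1 - π x) hX hε (measurable_const.sub hA) h1A1
    hY0 hY0b heX0
    (hpos.mono fun ω h => (hε.trans_le (by linarith [h.2])).ne') hig0 hμ0 hμ0b
    (by simpa only [hAY0] using hor0) (measurable_const.sub hπ)
    (fun x => by linarith [hπpos x]) hm0 hm0b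
    (hdr.imp (fun h => h.mono fun ω hω => congrArg (1 - ·) hω) And.right)
  calc _ = ∫ ω, ((m1 (X ω) + A ω * (Y1 ω - m1 (X ω)) / π (X ω))
        - (m0 (X ω) + (1 - A ω) * (Y0 ω - m0 (X ω)) / (1 - π (X ω)))) ∂ν :=
        integral_congr_ae (ae_of_all _ fun ω => by rw [hAY1, hAY0]; ring)
    _ = ∫ ω, Y1 ω ∂ν - ∫ ω, Y0 ω ∂ν := by rw [integral_sub int1 int0, arm1, arm0]
    _ = ∫ ω, (Y1 ω - Y0 ω) ∂ν :=
        (integral_sub (integrable_of_exists_abs_le hY1.aestronglyMeasurable hY1b)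
          (integrable_of_exists_abs_le hY0.aestronglyMeasurable hY0b)).symm

section TotalExpectation

variable {Ω : Type*} [MeasurableSpace Ω] {E : Type*} [NormedAddCommGroup E] [NormedSpace ℝ E]

lemma integral_cond_eq_inv_smul_setIntegral (μ : Measure Ω) (s : Set Ω) (g : Ω → E) :
    ∫ ω, g ω ∂μ[|s] = (μ s).toReal⁻¹ • ∫ ω in s, g ω ∂μ := by
  rw [ProbabilityTheory.cond, integral_smul_measure, ENNReal.toReal_inv]

lemma toReal_smul_integral_cond (μ : Measure Ω) [IsFiniteMeasure μ] (s : Set Ω) (g : Ω → E) :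
    (μ s).toReal • ∫ ω, g ω ∂μ[|s] = ∫ ω in s, g ω ∂μ := by
  rw [integral_cond_eq_inv_smul_setIntegral, smul_smul]
  rcases eq_or_ne (μ s) 0 with hs | hs
  · simp [Measure.restrict_eq_zero.2 hs]
  · rw [mul_inv_cancel₀ (ENNReal.toReal_ne_zero.2 ⟨hs, measure_ne_top μ s⟩), one_smul]

theorem sum_toReal_div_smul_integral_cond {S : Type*} [MeasurableSpace S]
    [MeasurableSingletonClass S] (μ : Measure Ω) [IsFiniteMeasure μ] {R : Ω → S}
    (hR : Measurable R) (T : Finset S) {g : Ω → E} (hg : Integrable g μ) :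
    ∑ k ∈ T, ((μ {ω | R ω = k}).toReal / (μ {ω | R ω ∈ T}).toReal) •
        ∫ ω, g ω ∂μ[|{ω | R ω = k}]
      = ∫ ω, g ω ∂μ[|{ω | R ω ∈ T}] := by
  have hunion : {ω | R ω ∈ T} = ⋃ k ∈ T, {ω | R ω = k} := by ext; simp
  have hmeas (k : S) : MeasurableSet {ω | R ω = k} := hR (measurableSet_singleton k)
  have hdisj : Set.PairwiseDisjoint (↑T) fun k => {ω | R ω = k} :=
    fun k _ l _ hkl => Set.disjoint_left.2 fun ω hk hl => hkl (hk.symm.trans hl)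
  simp only [div_eq_inv_mul, mul_smul, ← Finset.smul_sum, toReal_smul_integral_cond]
  rw [integral_cond_eq_inv_smul_setIntegral, hunion,
    integral_biUnion_finset T (fun k _ => hmeas k) hdisj
      fun k _ => hg.integrableOn]

end TotalExpectation

theorem site_stratified_aipw_mix_and_match_double_robustness_general
    {Ω : Type*} [MeasurableSpace Ω] (P : Measure Ω) [IsProbabilityMeasure P]
    {p : ℕ} (X : Ω → (Fin p → ℝ)) (A : Ω → ℝ) (Y1 Y0 Y : Ω → ℝ)
    {S : Type*} [MeasurableSpace S] [MeasurableSingletonClass S]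
    (R : Ω → S) (T : Finset S)
    (e μ1 μ0 π m1 m0 : S → (Fin p → ℝ) → ℝ) (ε : ℝ)
    (hX : Measurable X) (hA : Measurable A) (hA01 : ∀ ω, A ω = 0 ∨ A ω = 1)
    (hY1 : Measurable Y1) (hY0 : Measurable Y0)
    (hY1b : ∃ C, ∀ ω, |Y1 ω| ≤ C) (hY0b : ∃ C, ∀ ω, |Y0 ω| ≤ C)
    (hcons : ∀ ω, Y ω = A ω * Y1 ω + (1 - A ω) * Y0 ω)
    (hR : Measurable R)
    (hε : 0 < ε)
    (heX : ∀ k ∈ T, (fun ω => e k (X ω))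
      =ᵐ[P[|{ω | R ω = k}]] (P[|{ω | R ω = k}])[A | MeasurableSpace.comap X inferInstance])
    (hpos : ∀ k ∈ T, ∀ᵐ ω ∂(P[|{ω | R ω = k}]), ε ≤ e k (X ω) ∧ e k (X ω) ≤ 1 - ε)
    (hig1 : ∀ k ∈ T, (P[|{ω | R ω = k}])[fun ω => A ω * Y1 ω |
        MeasurableSpace.comap X inferInstance]
      =ᵐ[P[|{ω | R ω = k}]] fun ω => e k (X ω) *
        ((P[|{ω | R ω = k}])[Y1 | MeasurableSpace.comap X inferInstance]) ω)
    (hig0 : ∀ k ∈ T, (P[|{ω | R ω = k}])[fun ω => (1 - A ω) * Y0 ω |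
        MeasurableSpace.comap X inferInstance]
      =ᵐ[P[|{ω | R ω = k}]] fun ω => (1 - e k (X ω)) *
        ((P[|{ω | R ω = k}])[Y0 | MeasurableSpace.comap X inferInstance]) ω)
    (hμ1 : ∀ k ∈ T, Measurable (μ1 k)) (hμ0 : ∀ k ∈ T, Measurable (μ0 k))
    (hμ1b : ∀ k ∈ T, ∃ C, ∀ x, |μ1 k x| ≤ C) (hμ0b : ∀ k ∈ T, ∃ C, ∀ x, |μ0 k x| ≤ C)
    (hor1 : ∀ k ∈ T, (P[|{ω | R ω = k}])[fun ω => A ω * (Y ω - μ1 k (X ω)) |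
        MeasurableSpace.comap X inferInstance] =ᵐ[P[|{ω | R ω = k}]] fun _ => (0 : ℝ))
    (hor0 : ∀ k ∈ T, (P[|{ω | R ω = k}])[fun ω => (1 - A ω) * (Y ω - μ0 k (X ω)) |
        MeasurableSpace.comap X inferInstance] =ᵐ[P[|{ω | R ω = k}]] fun _ => (0 : ℝ))
    (hπ : ∀ k ∈ T, Measurable (π k)) (hπpos : ∀ k ∈ T, ∀ x, ε ≤ π k x ∧ π k x ≤ 1 - ε)
    (hm1 : ∀ k ∈ T, Measurable (m1 k)) (hm0 : ∀ k ∈ T, Measurable (m0 k))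
    (hm1b : ∀ k ∈ T, ∃ C, ∀ x, |m1 k x| ≤ C) (hm0b : ∀ k ∈ T, ∃ C, ∀ x, |m0 k x| ≤ C)
    (hdr : ∀ k ∈ T,
      (∀ᵐ x ∂(Measure.map X (P[|{ω | R ω = k}])), π k x = e k x)
      ∨ ((∀ᵐ x ∂(Measure.map X (P[|{ω | R ω = k}])), m1 k x = μ1 k x)
          ∧ (∀ᵐ x ∂(Measure.map X (P[|{ω | R ω = k}])), m0 k x = μ0 k x))) :
    ∑ k ∈ T, ((P {ω | R ω = k}).toReal / (P {ω | R ω ∈ T}).toReal) *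
        ∫ ω, (m1 k (X ω) - m0 k (X ω) + A ω * (Y ω - m1 k (X ω)) / π k (X ω)
          - (1 - A ω) * (Y ω - m0 k (X ω)) / (1 - π k (X ω))) ∂(P[|{ω | R ω = k}])
      = ∫ ω, (Y1 ω - Y0 ω) ∂(P[|{ω | R ω ∈ T}]) := by
  have hae {ν : Measure Ω} {q : (Fin p → ℝ) → Prop} (h : ∀ᵐ x ∂ν.map X, q x) :
      ∀ᵐ ω ∂ν, q (X ω) :=
    ae_of_ae_map hX.aemeasurable h
  have hsite (k : S) (hk : k ∈ T) :
      ∫ ω, (m1 k (X ω) - m0 k (X ω) + A ω * (Y ω - m1 k (X ω)) / π k (X ω)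
          - (1 - A ω) * (Y ω - m0 k (X ω)) / (1 - π k (X ω))) ∂(P[|{ω | R ω = k}])
        = ∫ ω, (Y1 ω - Y0 ω) ∂(P[|{ω | R ω = k}]) :=
    integral_aipw_eq_integral_sub_of_or hε hX hA hA01 hY1 hY0 hY1b hY0b hcons (heX k hk) (hpos k hk)
      (hig1 k hk) (hig0 k hk) (hμ1 k hk) (hμ0 k hk) (hμ1b k hk) (hμ0b k hk) (hor1 k hk)
      (hor0 k hk) (hπ k hk) (hπpos k hk) (hm1 k hk) (hm0 k hk) (hm1b k hk) (hm0b k hk)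
      ((hdr k hk).imp hae (And.imp hae hae))
  rw [Finset.sum_congr rfl fun k hk => congrArg _ (hsite k hk)]
  exact sum_toReal_div_smul_integral_cond P hR T
    ((integrable_of_exists_abs_le hY1.aestronglyMeasurable hY1b).sub
      (integrable_of_exists_abs_le hY0.aestronglyMeasurable hY0b))

/-- **Mix-and-match double robustness of the site-stratified target estimator.**
If for every target site `k ∈ T` either the site propensity score model or the site outcome
regression model is correctly specified (possibly different alternatives in different sites),
the weighted site-stratified AIPW functional identifies the target average treatment effect
`E[Y¹ − Y⁰ ∣ R ∈ T]`. -/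
theorem site_stratified_aipw_mix_and_match_double_robustness
    {Ω : Type*} [MeasurableSpace Ω] (P : Measure Ω) [IsProbabilityMeasure P]
    {p : ℕ} (X : Ω → (Fin p → ℝ)) (A : Ω → ℝ) (Y1 Y0 Y : Ω → ℝ)
    {S : Type*} [Fintype S] [MeasurableSpace S] [MeasurableSingletonClass S]
    (R : Ω → S) (T : Finset S)
    (e μ1 μ0 π m1 m0 : S → (Fin p → ℝ) → ℝ) (ε : ℝ)
    (hX : Measurable X) (hA : Measurable A) (hA01 : ∀ ω, A ω = 0 ∨ A ω = 1)
    (hY1 : Measurable Y1) (hY0 : Measurable Y0)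
    (hY1b : ∃ C, ∀ ω, |Y1 ω| ≤ C) (hY0b : ∃ C, ∀ ω, |Y0 ω| ≤ C)
    (hcons : ∀ ω, Y ω = A ω * Y1 ω + (1 - A ω) * Y0 ω)
    (hR : Measurable R) (hTne : T.Nonempty)
    (hTpos : ∀ k ∈ T, P {ω | R ω = k} ≠ 0)
    (hε : 0 < ε) (hε' : ε < 1 / 2)
    (he : ∀ k ∈ T, Measurable (e k))
    (heX : ∀ k ∈ T, (fun ω => e k (X ω))
      =ᵐ[P[|{ω | R ω = k}]] (P[|{ω | R ω = k}])[A | MeasurableSpace.comap X inferInstance])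
    (hpos : ∀ k ∈ T, ∀ᵐ ω ∂(P[|{ω | R ω = k}]), ε ≤ e k (X ω) ∧ e k (X ω) ≤ 1 - ε)
    (hig1 : ∀ k ∈ T, (P[|{ω | R ω = k}])[fun ω => A ω * Y1 ω |
        MeasurableSpace.comap X inferInstance]
      =ᵐ[P[|{ω | R ω = k}]] fun ω => e k (X ω) *
        ((P[|{ω | R ω = k}])[Y1 | MeasurableSpace.comap X inferInstance]) ω)
    (hig0 : ∀ k ∈ T, (P[|{ω | R ω = k}])[fun ω => (1 - A ω) * Y0 ω |
        MeasurableSpace.comap X inferInstance]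
      =ᵐ[P[|{ω | R ω = k}]] fun ω => (1 - e k (X ω)) *
        ((P[|{ω | R ω = k}])[Y0 | MeasurableSpace.comap X inferInstance]) ω)
    (hμ1 : ∀ k ∈ T, Measurable (μ1 k)) (hμ0 : ∀ k ∈ T, Measurable (μ0 k))
    (hμ1b : ∀ k ∈ T, ∃ C, ∀ x, |μ1 k x| ≤ C) (hμ0b : ∀ k ∈ T, ∃ C, ∀ x, |μ0 k x| ≤ C)
    (hor1 : ∀ k ∈ T, (P[|{ω | R ω = k}])[fun ω => A ω * (Y ω - μ1 k (X ω)) |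
        MeasurableSpace.comap X inferInstance] =ᵐ[P[|{ω | R ω = k}]] fun _ => (0 : ℝ))
    (hor0 : ∀ k ∈ T, (P[|{ω | R ω = k}])[fun ω => (1 - A ω) * (Y ω - μ0 k (X ω)) |
        MeasurableSpace.comap X inferInstance] =ᵐ[P[|{ω | R ω = k}]] fun _ => (0 : ℝ))
    (hπ : ∀ k ∈ T, Measurable (π k)) (hπpos : ∀ k ∈ T, ∀ x, ε ≤ π k x ∧ π k x ≤ 1 - ε)
    (hm1 : ∀ k ∈ T, Measurable (m1 k)) (hm0 : ∀ k ∈ T, Measurable (m0 k))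
    (hm1b : ∀ k ∈ T, ∃ C, ∀ x, |m1 k x| ≤ C) (hm0b : ∀ k ∈ T, ∃ C, ∀ x, |m0 k x| ≤ C)
    (hdr : ∀ k ∈ T,
      (∀ᵐ x ∂(Measure.map X (P[|{ω | R ω = k}])), π k x = e k x)
      ∨ ((∀ᵐ x ∂(Measure.map X (P[|{ω | R ω = k}])), m1 k x = μ1 k x)
          ∧ (∀ᵐ x ∂(Measure.map X (P[|{ω | R ω = k}])), m0 k x = μ0 k x))) :
    ∑ k ∈ T, ((P {ω | R ω = k}).toReal / (P {ω | R ω ∈ T}).toReal) *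
        ∫ ω, (m1 k (X ω) - m0 k (X ω) + A ω * (Y ω - m1 k (X ω)) / π k (X ω)
          - (1 - A ω) * (Y ω - m0 k (X ω)) / (1 - π k (X ω))) ∂(P[|{ω | R ω = k}])
      = ∫ ω, (Y1 ω - Y0 ω) ∂(P[|{ω | R ω ∈ T}]) :=
  site_stratified_aipw_mix_and_match_double_robustness_general P X A Y1 Y0 Y R T e μ1 μ0 π m1 m0 ε
    hX hA hA01 hY1 hY0 hY1b hY0b hcons hR hε heX hpos hig1 hig0 hμ1 hμ0 hμ1b hμ0b hor1 hor0 hπ hπpos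
    hm1 hm0 hm1b hm0b hdr
end

section
/- Bayes identity for the density ratio: the law of X under the conditional probability P(· ∣ C) is absolutely continuous with respect to the law of X under P(· ∣ B), and its Radon–Nikodym derivative equals, a.e. with respect to the law of X under P(· ∣ B), the function x ↦ (P(B)·h_C(x)) / (P(C)·h_B(x)). -/
open MeasureTheory ProbabilityTheory
open scoped ENNReal

/-! The defining property of conditional expectation says that the law of `X` under `P(·∣S)` has
density `h_S / P(S)` with respect to the law of `X` under `P`. Where `h_B > 0`, the density
`h_C / P(C)` factors as `h_B / P(B)` times the claimed ratio, so the law under `P(·∣C)` is the law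
under `P(·∣B)` with that ratio as density, and the Radon–Nikodym derivative of a measure with
density is its density. -/

theorem ENNReal.ofReal_div_mul_ofReal_div {b c : ℝ≥0∞} (hb : b ≠ 0) (hb' : b ≠ ∞) (hc : c ≠ 0)
    (hc' : c ≠ ∞) {u : ℝ} (hu : 0 < u) (v : ℝ) :
    ENNReal.ofReal u / b * ENNReal.ofReal (b.toReal * v / (c.toReal * u))
      = ENNReal.ofReal v / c := by
  have hb₀ : 0 < b.toReal := ENNReal.toReal_pos hb hb'
  have hc₀ : 0 < c.toReal := ENNReal.toReal_pos hc hc'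
  rw [← ENNReal.ofReal_toReal hb', ← ENNReal.ofReal_toReal hc', ← ENNReal.ofReal_div_of_pos hb₀,
    ← ENNReal.ofReal_div_of_pos hc₀, ← ENNReal.ofReal_mul (by positivity)]
  congr 1
  rw [ENNReal.toReal_ofReal hb₀.le, ENNReal.toReal_ofReal hc₀.le]
  field_simp

theorem MeasureTheory.Measure.withDensity_eq_withDensity_withDensity {α : Type*}
    [MeasurableSpace α] (μ : Measure α) {f g h : α → ℝ≥0∞} (hf : Measurable f) (hh : Measurable h)
    (hfh : (fun x => f x * h x) =ᵐ[μ] g) :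
    μ.withDensity g = (μ.withDensity f).withDensity h := by
  rw [← withDensity_mul μ hf hh]
  exact withDensity_congr_ae hfh.symm

section

variable {Ω E : Type*} {m m₀ : MeasurableSpace Ω} [MeasurableSpace E]

theorem setLIntegral_ofReal_eq_measure_inter_of_ae_eq_condExp {P : Measure Ω}
    [IsFiniteMeasure P] (hm : m ≤ m₀) {S : Set Ω} (hS : MeasurableSet S) {g : Ω → ℝ}
    (hg : g =ᵐ[P] P[S.indicator fun _ => (1 : ℝ) | m]) {t : Set Ω} (ht : MeasurableSet[m] t) :
    ∫⁻ ω in t, ENNReal.ofReal (g ω) ∂P = P (S ∩ t) := by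
  have hg_nonneg : 0 ≤ᵐ[P] g :=
    (condExp_nonneg (.of_forall fun _ => Set.indicator_nonneg (fun _ _ => zero_le_one) _)).trans_eq
      hg.symm
  have hg_int : Integrable g P := integrable_condExp.congr hg.symm
  rw [← ofReal_integral_eq_lintegral_ofReal hg_int.restrict (ae_restrict_of_ae hg_nonneg),
    setIntegral_congr_ae (hm t ht) (hg.mono fun _ h _ => h),
    setIntegral_condExp hm ((integrable_const 1).indicator hS) ht,
    setIntegral_indicator hS, setIntegral_const, smul_eq_mul, mul_one, Set.inter_comm,
    ofReal_measureReal]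

theorem map_cond_eq_withDensity {P : Measure Ω} [IsFiniteMeasure P] {X : Ω → E}
    (hX : Measurable X) {S : Set Ω} (hS : MeasurableSet S) {k : E → ℝ} (hk : Measurable k)
    (hver : (fun ω => k (X ω))
      =ᵐ[P] P[S.indicator fun _ => (1 : ℝ) | MeasurableSpace.comap X inferInstance]) :
    (P[|S]).map X = (P.map X).withDensity (fun x => ENNReal.ofReal (k x) / P S) := by
  ext A hA
  simp_rw [Measure.map_apply hX hA, cond_apply hS, withDensity_apply _ hA, ENNReal.div_eq_inv_mul]
  rw [lintegral_const_mul _ hk.ennreal_ofReal, setLIntegral_map hA hk.ennreal_ofReal hX,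
    setLIntegral_ofReal_eq_measure_inter_of_ae_eq_condExp hX.comap_le hS hver ⟨A, hA, rfl⟩]

end

/-- **Bayes identity for the density ratio.**
If `h_B∘X` and `h_C∘X` are versions of `E[1_B ∣ σ(X)]` and `E[1_C ∣ σ(X)]` and `h_B∘X ≥ ε > 0`
a.s., then the law of `X` under `P(·∣C)` is absolutely continuous w.r.t. the law of `X` under
`P(·∣B)`, with Radon–Nikodym derivative `x ↦ (P(B)·h_C(x)) / (P(C)·h_B(x))` a.e. -/
theorem density_ratio_bayes_identity
    {Ω : Type*} [MeasurableSpace Ω] (P : Measure Ω) [IsProbabilityMeasure P]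
    {p : ℕ} (X : Ω → (Fin p → ℝ)) (hX : Measurable X)
    (B C : Set Ω) (hBmeas : MeasurableSet B) (hCmeas : MeasurableSet C)
    (hPB : P B ≠ 0) (hPC : P C ≠ 0)
    (hB hC : (Fin p → ℝ) → ℝ) (ε : ℝ) (hε : 0 < ε)
    (hhB : Measurable hB) (hhC : Measurable hC)
    (hBver : (fun ω => hB (X ω))
      =ᵐ[P] P[B.indicator fun _ => (1 : ℝ) | MeasurableSpace.comap X inferInstance])
    (hCver : (fun ω => hC (X ω))
      =ᵐ[P] P[C.indicator fun _ => (1 : ℝ) | MeasurableSpace.comap X inferInstance])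
    (hover : ∀ᵐ ω ∂P, ε ≤ hB (X ω)) :
    Measure.map X (P[|C]) ≪ Measure.map X (P[|B])
      ∧ (Measure.map X (P[|C])).rnDeriv (Measure.map X (P[|B]))
        =ᵐ[Measure.map X (P[|B])]
          fun x => ENNReal.ofReal ((P B).toReal * hC x / ((P C).toReal * hB x)) := by
  have hratio :
      Measurable fun x => ENNReal.ofReal ((P B).toReal * hC x / ((P C).toReal * hB x)) :=
    ((measurable_const.mul hhC).div (measurable_const.mul hhB)).ennreal_ofReal
  have hB_pos : ∀ᵐ x ∂P.map X, 0 < hB x := by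
    rw [ae_map_iff hX.aemeasurable (measurableSet_lt measurable_const hhB)]
    exact hover.mono fun _ h => hε.trans_le h
  have hbayes : (P.map X).withDensity (fun x => ENNReal.ofReal (hC x) / P C)
      = ((P[|B]).map X).withDensity
          fun x => ENNReal.ofReal ((P B).toReal * hC x / ((P C).toReal * hB x)) := by
    rw [map_cond_eq_withDensity hX hBmeas hhB hBver]
    refine Measure.withDensity_eq_withDensity_withDensity _ (hhB.ennreal_ofReal.div_const _)
      hratio ?_
    filter_upwards [hB_pos] with x hx
    exact ENNReal.ofReal_div_mul_ofReal_div hPB (measure_ne_top _ _) hPC (measure_ne_top _ _) hx _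
  rw [map_cond_eq_withDensity hX hCmeas hhC hCver, hbayes]
  exact ⟨withDensity_absolutelyContinuous _ _, Measure.rnDeriv_withDensity _ hratio⟩
end

section
/- Bound on the density ratio under overlap: a.e. with respect to the law of X under P(· ∣ B), the Radon–Nikodym derivative of the law of X under P(· ∣ C) with respect to the law of X under P(· ∣ B) is at most P(B) / (ε · P(C)). -/
/-!
Integrating the overlap bound `ε ≤ E[1_B ∣ X]` over `{X ∈ S}` gives `ε P(X ∈ S) ≤ P(B, X ∈ S)`.
Since also `P(C, X ∈ S) ≤ P(X ∈ S)`, the law of `X` under `P(·∣C)` is dominated, as a measure, by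
`P(B) / (ε P(C))` times its law under `P(·∣B)`, and a measure dominated by `c • ν` has density at
most `c` with respect to `ν`.
-/

open MeasureTheory ProbabilityTheory
open scoped ENNReal

namespace MeasureTheory

variable {α : Type*} {m m0 : MeasurableSpace α}

lemma Measure.rnDeriv_le_of_le_smul {μ ν : Measure α} [SigmaFinite ν] {c : ℝ≥0∞}
    (h : μ ≤ c • ν) : μ.rnDeriv ν ≤ᵐ[ν] fun _ ↦ c := by
  refine ae_le_of_forall_setLIntegral_le_of_sigmaFinite (μ.measurable_rnDeriv ν) fun s _ _ ↦ ?_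
  rw [setLIntegral_const]
  exact (Measure.setLIntegral_rnDeriv_le s).trans (h s)

lemma Measure.restrict_eq_measure_smul_cond (μ : Measure α) [IsFiniteMeasure μ] (s : Set α) :
    μ.restrict s = μ s • μ[|s] := by
  by_cases hs : μ s = 0
  · simp [hs]
  · rw [ProbabilityTheory.cond, smul_smul, ENNReal.mul_inv_cancel hs (measure_ne_top μ s),
      one_smul]

lemma Measure.cond_le_inv_smul (μ : Measure α) (s : Set α) : μ[|s] ≤ (μ s)⁻¹ • μ :=
  smul_le_smul_left _ Measure.restrict_le_self

lemma ofReal_mul_le_measure_inter_of_le_condExp_indicator (hm : m ≤ m0)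
    {μ : Measure α} [IsFiniteMeasure μ] {s : Set α} (hs : MeasurableSet s) {ε : ℝ}
    (hε : ∀ᵐ x ∂μ, ε ≤ μ[s.indicator fun _ ↦ (1 : ℝ) | m] x) {t : Set α}
    (ht : MeasurableSet[m] t) : ENNReal.ofReal ε * μ t ≤ μ (t ∩ s) := by
  have hreal : ε * μ.real t ≤ μ.real (t ∩ s) := calc
    ε * μ.real t = ∫ _ in t, ε ∂μ := by simp [mul_comm]
    _ ≤ ∫ x in t, μ[s.indicator fun _ ↦ (1 : ℝ) | m] x ∂μ :=
      setIntegral_mono_ae (integrable_const ε).integrableOn integrable_condExp.integrableOn hε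
    _ = ∫ x in t, s.indicator (fun _ ↦ (1 : ℝ)) x ∂μ :=
      setIntegral_condExp hm ((integrable_const 1).indicator hs) ht
    _ = μ.real (t ∩ s) := by simp [setIntegral_indicator hs]
  calc ENNReal.ofReal ε * μ t = ENNReal.ofReal (ε * μ.real t) := by
        rw [ENNReal.ofReal_mul' measureReal_nonneg, ofReal_measureReal]
    _ ≤ ENNReal.ofReal (μ.real (t ∩ s)) := ENNReal.ofReal_le_ofReal hreal
    _ = μ (t ∩ s) := ofReal_measureReal

lemma Measure.map_le_smul_map_restrict_of_le_condExp_indicator {β : Type*} [MeasurableSpace β]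
    {X : α → β} (hX : Measurable X) {μ : Measure α} [IsFiniteMeasure μ] {s : Set α}
    (hs : MeasurableSet s) {ε : ℝ} (hε₀ : 0 < ε)
    (hε : ∀ᵐ x ∂μ, ε ≤ μ[s.indicator fun _ ↦ (1 : ℝ) | MeasurableSpace.comap X inferInstance] x) :
    μ.map X ≤ (ENNReal.ofReal ε)⁻¹ • (μ.restrict s).map X := by
  refine Measure.le_iff.2 fun S hS ↦ ?_
  rw [Measure.smul_apply, smul_eq_mul, map_apply hX hS, map_apply hX hS,
    restrict_apply (hX hS), ← ENNReal.div_eq_inv_mul, ENNReal.le_div_iff_mul_le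
    (.inl (ENNReal.ofReal_pos.2 hε₀).ne') (.inl ENNReal.ofReal_ne_top), mul_comm]
  exact ofReal_mul_le_measure_inter_of_le_condExp_indicator hX.comap_le hs hε ⟨S, hS, rfl⟩

end MeasureTheory

theorem density_ratio_bound_under_overlap_general
    {Ω : Type*} [MeasurableSpace Ω] (P : Measure Ω) [IsProbabilityMeasure P]
    {p : ℕ} (X : Ω → (Fin p → ℝ)) (hX : Measurable X)
    (B C : Set Ω) (hBmeas : MeasurableSet B)
    (hPC : P C ≠ 0)
    (hB : (Fin p → ℝ) → ℝ) (ε : ℝ) (hε : 0 < ε)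
    (hBver : (fun ω => hB (X ω))
      =ᵐ[P] P[B.indicator fun _ => (1 : ℝ) | MeasurableSpace.comap X inferInstance])
    (hover : ∀ᵐ ω ∂P, ε ≤ hB (X ω)) :
    ∀ᵐ x ∂(Measure.map X (P[|B])),
      (Measure.map X (P[|C])).rnDeriv (Measure.map X (P[|B])) x
        ≤ ENNReal.ofReal ((P B).toReal / (ε * (P C).toReal)) := by
  have hoverlap : ∀ᵐ ω ∂P,
      ε ≤ P[B.indicator fun _ => (1 : ℝ) | MeasurableSpace.comap X inferInstance] ω := by
    filter_upwards [hover, hBver] with ω hω hω' using hω'.symm ▸ hω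
  have hle : (P[|C]).map X ≤ ((P C)⁻¹ * (ENNReal.ofReal ε)⁻¹ * P B) • (P[|B]).map X := calc
    (P[|C]).map X ≤ ((P C)⁻¹ • P).map X := Measure.map_mono (Measure.cond_le_inv_smul P C) hX
    _ = (P C)⁻¹ • P.map X := Measure.map_smul _ _ _
    _ ≤ (P C)⁻¹ • (ENNReal.ofReal ε)⁻¹ • (P.restrict B).map X := smul_le_smul_left _
      (Measure.map_le_smul_map_restrict_of_le_condExp_indicator hX hBmeas hε hoverlap)
    _ = ((P C)⁻¹ * (ENNReal.ofReal ε)⁻¹ * P B) • (P[|B]).map X := by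
      rw [Measure.restrict_eq_measure_smul_cond, Measure.map_smul, smul_smul, smul_smul]
  have hconst : ENNReal.ofReal ((P B).toReal / (ε * (P C).toReal))
      = (P C)⁻¹ * (ENNReal.ofReal ε)⁻¹ * P B := by
    rw [ENNReal.ofReal_div_of_pos (mul_pos hε (ENNReal.toReal_pos hPC (measure_ne_top P C))),
      ENNReal.ofReal_mul hε.le, ENNReal.ofReal_toReal (measure_ne_top P B),
      ENNReal.ofReal_toReal (measure_ne_top P C), div_eq_mul_inv,
      ENNReal.mul_inv (.inl (ENNReal.ofReal_pos.2 hε).ne') (.inl ENNReal.ofReal_ne_top)]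
    ring
  rw [hconst]
  exact Measure.rnDeriv_le_of_le_smul hle

/-- **Bound on the density ratio under overlap.**
If `h_B∘X` is a version of `E[1_B ∣ σ(X)]` with `h_B∘X ≥ ε > 0` a.s. (overlap), then, a.e.
with respect to the law of `X` under `P(·∣B)`, the Radon–Nikodym derivative of the law of `X`
under `P(·∣C)` w.r.t. the law of `X` under `P(·∣B)` is at most `P(B) / (ε · P(C))`. -/
theorem density_ratio_bound_under_overlap
    {Ω : Type*} [MeasurableSpace Ω] (P : Measure Ω) [IsProbabilityMeasure P]
    {p : ℕ} (X : Ω → (Fin p → ℝ)) (hX : Measurable X)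
    (B C : Set Ω) (hBmeas : MeasurableSet B) (hCmeas : MeasurableSet C)
    (hPB : P B ≠ 0) (hPC : P C ≠ 0)
    (hB hC : (Fin p → ℝ) → ℝ) (ε : ℝ) (hε : 0 < ε)
    (hhB : Measurable hB) (hhC : Measurable hC)
    (hBver : (fun ω => hB (X ω))
      =ᵐ[P] P[B.indicator fun _ => (1 : ℝ) | MeasurableSpace.comap X inferInstance])
    (hCver : (fun ω => hC (X ω))
      =ᵐ[P] P[C.indicator fun _ => (1 : ℝ) | MeasurableSpace.comap X inferInstance])
    (hover : ∀ᵐ ω ∂P, ε ≤ hB (X ω)) :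
    ∀ᵐ x ∂(Measure.map X (P[|B])),
      (Measure.map X (P[|C])).rnDeriv (Measure.map X (P[|B])) x
        ≤ ENNReal.ofReal ((P B).toReal / (ε * (P C).toReal)) :=
  density_ratio_bound_under_overlap_general P X hX B C hBmeas hPC hB ε hε hBver hover
end

section
/- Double robustness of the source-site density-ratio-weighted estimator: let Φ = E_T[ m₁(X) − m₀(X) ] + E_k[ ω̃(X)·( A·(Y−m₁(X))/π(X) − (1−A)·(Y−m₀(X))/(1−π(X)) ) ]. Then Φ = E[Y¹ − Y⁰ ∣ R ∈ T] provided that either (1) m₁ = μ_{1,T}, m₀ = μ_{0,T} a.e. under the law of X given R ∈ T and m₁ = μ_{1,k}, m₀ = μ_{0,k} a.e. under the law of X given R = k (outcome regression correct for target and source), or (2) π = e_k and ω̃ = ω a.e. under the law of X given R = k, and μ_{1,k} = μ_{1,T}, μ_{0,k} = μ_{0,T} a.e. under the law of X given R ∈ T (propensity score and density ratio correct for the source site, with outcome regression shared across sites). -/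
/-!
Conditioning on `X`, the residual `A (Y - m₁(X))` has source conditional mean
`(μ_{1,k} - m₁)(X) e_k(X)`, so the augmentation term equals
`E_k[ω̃(X) ((μ_{1,k} - m₁) e_k / π - (μ_{0,k} - m₀) (1 - e_k) / (1 - π))(X)]`; on the target,
regression, ignorability and overlap give `E_T[Y¹ - Y⁰] = E_T[μ_{1,T}(X) - μ_{0,T}(X)]`.
Under (1) the augmentation vanishes and `m = μ_T`. Under (2) the propensity ratios cancel and
the density ratio carries the augmentation to the target, where it corrects `E_T[m₁ - m₀]` to
`E_T[μ_{1,k} - μ_{0,k}] = E_T[μ_{1,T} - μ_{0,T}]`.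
-/

open MeasureTheory ProbabilityTheory

section Bounded

variable {α : Type*} {f g : α → ℝ}

lemma exists_abs_le_add (hf : ∃ C, ∀ x, |f x| ≤ C) (hg : ∃ C, ∀ x, |g x| ≤ C) :
    ∃ C, ∀ x, |f x + g x| ≤ C :=
  let ⟨C, hC⟩ := hf; let ⟨D, hD⟩ := hg
  ⟨C + D, fun x => (abs_add_le _ _).trans (add_le_add (hC x) (hD x))⟩

lemma exists_abs_le_sub (hf : ∃ C, ∀ x, |f x| ≤ C) (hg : ∃ C, ∀ x, |g x| ≤ C) :
    ∃ C, ∀ x, |f x - g x| ≤ C :=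
  let ⟨C, hC⟩ := hf; let ⟨D, hD⟩ := hg
  ⟨C + D, fun x => (abs_sub _ _).trans (add_le_add (hC x) (hD x))⟩

lemma exists_abs_le_mul (hf : ∃ C, ∀ x, |f x| ≤ C) (hg : ∃ C, ∀ x, |g x| ≤ C) :
    ∃ C, ∀ x, |f x * g x| ≤ C :=
  let ⟨C, hC⟩ := hf; let ⟨D, hD⟩ := hg
  ⟨C * D, fun x => (abs_mul _ _).trans_le <|
    mul_le_mul (hC x) (hD x) (abs_nonneg _) ((abs_nonneg _).trans (hC x))⟩

lemma exists_abs_inv_le_of_le {ε : ℝ} (hε : 0 < ε) (hf : ∀ x, ε ≤ f x) :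
    ∃ C, ∀ x, |(f x)⁻¹| ≤ C :=
  ⟨ε⁻¹, fun x => by rw [abs_inv, abs_of_pos (hε.trans_le (hf x))]; exact inv_anti₀ hε (hf x)⟩

lemma Measurable.integrable_of_exists_abs_le [MeasurableSpace α] {μ : Measure α}
    [IsFiniteMeasure μ] (hf : Measurable f) (hfb : ∃ C, ∀ x, |f x| ≤ C) : Integrable f μ :=
  let ⟨C, hC⟩ := hfb
  .of_bound hf.aestronglyMeasurable C (ae_of_all _ hC)

end Bounded

section BinaryTreatment

variable {Ω : Type*} {A Y1 Y0 Y : Ω → ℝ}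

lemma exists_abs_le_of_binary (hA01 : ∀ ω, A ω = 0 ∨ A ω = 1) : ∃ C, ∀ ω, |A ω| ≤ C :=
  ⟨1, fun ω => by rcases hA01 ω with h | h <;> simp [h]⟩

lemma exists_abs_one_sub_le_of_binary (hA01 : ∀ ω, A ω = 0 ∨ A ω = 1) :
    ∃ C, ∀ ω, |1 - A ω| ≤ C :=
  ⟨1, fun ω => by rcases hA01 ω with h | h <;> simp [h]⟩

lemma mul_observed_eq_mul_treated (hA01 : ∀ ω, A ω = 0 ∨ A ω = 1)
    (hcons : ∀ ω, Y ω = A ω * Y1 ω + (1 - A ω) * Y0 ω) (ω : Ω) : A ω * Y ω = A ω * Y1 ω := by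
  rcases hA01 ω with h | h <;> simp [hcons ω, h]

lemma mul_observed_eq_mul_control (hA01 : ∀ ω, A ω = 0 ∨ A ω = 1)
    (hcons : ∀ ω, Y ω = A ω * Y1 ω + (1 - A ω) * Y0 ω) (ω : Ω) :
    (1 - A ω) * Y ω = (1 - A ω) * Y0 ω := by
  rcases hA01 ω with h | h <;> simp [hcons ω, h]

lemma exists_abs_le_of_consistency (hA01 : ∀ ω, A ω = 0 ∨ A ω = 1)
    (hY1b : ∃ C, ∀ ω, |Y1 ω| ≤ C) (hY0b : ∃ C, ∀ ω, |Y0 ω| ≤ C)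
    (hcons : ∀ ω, Y ω = A ω * Y1 ω + (1 - A ω) * Y0 ω) : ∃ C, ∀ ω, |Y ω| ≤ C := by
  simpa only [← hcons] using exists_abs_le_add (exists_abs_le_mul (exists_abs_le_of_binary hA01)
    hY1b) (exists_abs_le_mul (exists_abs_one_sub_le_of_binary hA01) hY0b)

lemma measurable_of_consistency [MeasurableSpace Ω] (hA : Measurable A) (hY1 : Measurable Y1)
    (hY0 : Measurable Y0) (hcons : ∀ ω, Y ω = A ω * Y1 ω + (1 - A ω) * Y0 ω) : Measurable Y := by
  rw [funext hcons]
  exact (hA.mul hY1).add ((measurable_const.sub hA).mul hY0)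

end BinaryTreatment

section CondExpGivenX

variable {Ω E : Type*} [mΩ : MeasurableSpace Ω] [mE : MeasurableSpace E] {μ : Measure Ω}
  {X : Ω → E}

lemma MeasureTheory.Integrable.comp_mul_of_exists_abs_le (hX : Measurable X) {g : E → ℝ}
    (hg : Measurable g) (hgb : ∃ C, ∀ x, |g x| ≤ C) {Z : Ω → ℝ} (hZ : Integrable Z μ) :
    Integrable (fun ω => g (X ω) * Z ω) μ :=
  let ⟨_, hC⟩ := hgb
  hZ.bdd_mul (hg.comp hX).aestronglyMeasurable (ae_of_all _ fun ω => hC (X ω))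

lemma integrable_comp_of_exists_abs_le [IsFiniteMeasure μ] (hX : Measurable X) {g : E → ℝ}
    (hg : Measurable g) (hgb : ∃ C, ∀ x, |g x| ≤ C) : Integrable (fun ω => g (X ω)) μ :=
  (hg.comp hX).integrable_of_exists_abs_le (hgb.imp fun _ h ω => h (X ω))

lemma integrable_mul_sub_comp [IsFiniteMeasure μ] (hX : Measurable X) {B Y : Ω → ℝ} {r : E → ℝ}
    (hB : Measurable B) (hBb : ∃ C, ∀ ω, |B ω| ≤ C) (hY : Measurable Y)
    (hYb : ∃ C, ∀ ω, |Y ω| ≤ C) (hr : Measurable r) (hrb : ∃ C, ∀ x, |r x| ≤ C) :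
    Integrable (fun ω => B ω * (Y ω - r (X ω))) μ :=
  (hB.mul (hY.sub (hr.comp hX))).integrable_of_exists_abs_le <|
    exists_abs_le_mul hBb (exists_abs_le_sub hYb (hrb.imp fun _ h ω => h (X ω)))

lemma condExp_comp_mul_ae_eq [IsFiniteMeasure μ] (hX : Measurable X) {g : E → ℝ} (hg : Measurable g)
    (hgb : ∃ C, ∀ x, |g x| ≤ C) {Z : Ω → ℝ} (hZ : Integrable Z μ) :
    μ[fun ω => g (X ω) * Z ω | mE.comap X] =ᵐ[μ] fun ω => g (X ω) * μ[Z | mE.comap X] ω :=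
  let ⟨C, hC⟩ := hgb
  condExp_stronglyMeasurable_mul_of_bound hX.comap_le
    (hg.comp (comap_measurable X)).stronglyMeasurable hZ C (ae_of_all _ fun ω => hC (X ω))

lemma condExp_one_sub_ae_eq [IsFiniteMeasure μ] {m : MeasurableSpace Ω} (hm : m ≤ mΩ) {B : Ω → ℝ}
    (hB : Integrable B μ) : μ[fun ω => 1 - B ω | m] =ᵐ[μ] fun ω => 1 - μ[B | m] ω := by
  filter_upwards [condExp_sub (integrable_const 1) hB m] with ω hω
  rw [show (fun ω => 1 - B ω) = (fun _ => (1 : ℝ)) - B from rfl, hω, Pi.sub_apply,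
    condExp_const hm]

lemma condExp_mul_sub_comp_ae_eq [IsFiniteMeasure μ] (hX : Measurable X) {B V : Ω → ℝ} {r m : E → ℝ}
    (hB : Integrable B μ) (hBV : Integrable (fun ω => B ω * (V ω - r (X ω))) μ)
    (hr : Measurable r) (hrb : ∃ C, ∀ x, |r x| ≤ C) (hm : Measurable m)
    (hmb : ∃ C, ∀ x, |m x| ≤ C)
    (hres : μ[fun ω => B ω * (V ω - r (X ω)) | mE.comap X] =ᵐ[μ] fun _ => 0) :
    μ[fun ω => B ω * (V ω - m (X ω)) | mE.comap X]
      =ᵐ[μ] fun ω => (r (X ω) - m (X ω)) * μ[B | mE.comap X] ω := by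
  have hsplit : (fun ω => B ω * (V ω - m (X ω)))
      = (fun ω => B ω * (V ω - r (X ω))) + fun ω => (r (X ω) - m (X ω)) * B ω := by
    funext ω; simp only [Pi.add_apply]; ring
  have hrm : ∃ C, ∀ x, |r x - m x| ≤ C := exists_abs_le_sub hrb hmb
  filter_upwards [condExp_add hBV (hB.comp_mul_of_exists_abs_le (g := fun x => r x - m x) hX
      (hr.sub hm) hrm) _, hres,
    condExp_comp_mul_ae_eq (g := fun x => r x - m x) hX (hr.sub hm) hrm hB]
    with ω hadd hzero hpull
  rw [hsplit, hadd, Pi.add_apply, hzero, zero_add, hpull]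

/-- Regression and ignorability both compute `E[B V | X]`; overlap cancels `E[B | X]`. -/
lemma integral_comp_eq_integral_of_ignorable [IsProbabilityMeasure μ] (hX : Measurable X)
    {B V Y : Ω → ℝ} {r e : E → ℝ} (hB : Integrable B μ)
    (hBY : Integrable (fun ω => B ω * (Y ω - r (X ω))) μ)
    (hr : Measurable r) (hrb : ∃ C, ∀ x, |r x| ≤ C) (hobs : ∀ ω, B ω * Y ω = B ω * V ω)
    (hres : μ[fun ω => B ω * (Y ω - r (X ω)) | mE.comap X] =ᵐ[μ] fun _ => 0)
    (heX : (fun ω => e (X ω)) =ᵐ[μ] μ[B | mE.comap X]) (he : ∀ᵐ ω ∂μ, e (X ω) ≠ 0)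
    (hign : μ[fun ω => B ω * V ω | mE.comap X]
      =ᵐ[μ] fun ω => e (X ω) * μ[V | mE.comap X] ω) :
    ∫ ω, r (X ω) ∂μ = ∫ ω, V ω ∂μ := by
  have hreg := condExp_mul_sub_comp_ae_eq (m := fun _ => 0) hX hB hBY hr hrb measurable_const
    ⟨0, fun _ => by simp⟩ hres
  simp only [sub_zero, hobs] at hreg
  have hrV : (fun ω => r (X ω)) =ᵐ[μ] μ[V | mE.comap X] := by
    filter_upwards [hreg, hign, heX, he] with ω hreg hign heX he
    rw [hreg, ← heX] at hign
    exact mul_left_cancel₀ he (by linear_combination hign)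
  rw [integral_congr_ae hrV, integral_condExp hX.comap_le]

lemma integral_comp_eq_integral_mul_of_map_eq_withDensity {ν₁ ν₂ : Measure Ω}
    (hX : Measurable X) {w f : E → ℝ} (hw : Measurable w) (hw0 : ∀ x, 0 ≤ w x)
    (hden : ν₁.map X = (ν₂.map X).withDensity fun x => ENNReal.ofReal (w x))
    (hf : Measurable f) :
    ∫ ω, f (X ω) ∂ν₁ = ∫ ω, w (X ω) * f (X ω) ∂ν₂ := by
  rw [← integral_map hX.aemeasurable hf.aestronglyMeasurable, hden,
    integral_withDensity_eq_integral_toReal_smul hw.ennreal_ofReal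
      (ae_of_all _ fun _ => ENNReal.ofReal_lt_top)]
  simp only [ENNReal.toReal_ofReal (hw0 _), smul_eq_mul]
  exact integral_map hX.aemeasurable (hw.mul hf).aestronglyMeasurable

theorem integral_regression_sub_eq_integral_sub [IsProbabilityMeasure μ] (hX : Measurable X)
    {A Y1 Y0 Y : Ω → ℝ} {μ1 μ0 e : E → ℝ} (hA : Measurable A) (hA01 : ∀ ω, A ω = 0 ∨ A ω = 1)
    (hY1 : Integrable Y1 μ) (hY0 : Integrable Y0 μ) (hY : Measurable Y)
    (hYb : ∃ C, ∀ ω, |Y ω| ≤ C) (hcons : ∀ ω, Y ω = A ω * Y1 ω + (1 - A ω) * Y0 ω)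
    (hμ1 : Measurable μ1) (hμ1b : ∃ C, ∀ x, |μ1 x| ≤ C)
    (hμ0 : Measurable μ0) (hμ0b : ∃ C, ∀ x, |μ0 x| ≤ C)
    (hor1 : μ[fun ω => A ω * (Y ω - μ1 (X ω)) | mE.comap X] =ᵐ[μ] fun _ => 0)
    (hor0 : μ[fun ω => (1 - A ω) * (Y ω - μ0 (X ω)) | mE.comap X] =ᵐ[μ] fun _ => 0)
    (heX : (fun ω => e (X ω)) =ᵐ[μ] μ[A | mE.comap X])
    (hoverlap : ∀ᵐ ω ∂μ, 0 < e (X ω) ∧ e (X ω) < 1)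
    (hig1 : μ[fun ω => A ω * Y1 ω | mE.comap X]
      =ᵐ[μ] fun ω => e (X ω) * μ[Y1 | mE.comap X] ω)
    (hig0 : μ[fun ω => (1 - A ω) * Y0 ω | mE.comap X]
      =ᵐ[μ] fun ω => (1 - e (X ω)) * μ[Y0 | mE.comap X] ω) :
    ∫ ω, (μ1 (X ω) - μ0 (X ω)) ∂μ = ∫ ω, (Y1 ω - Y0 ω) ∂μ := by
  have hAb := exists_abs_le_of_binary hA01
  have h1Ab := exists_abs_one_sub_le_of_binary hA01
  have hAint : Integrable A μ := hA.integrable_of_exists_abs_le hAb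
  have h1A : Measurable fun ω => 1 - A ω := measurable_const.sub hA
  have heX' : (fun ω => 1 - e (X ω)) =ᵐ[μ] μ[fun ω => 1 - A ω | mE.comap X] := by
    filter_upwards [heX, condExp_one_sub_ae_eq hX.comap_le hAint] with ω he he'
    rw [he', he]
  rw [integral_sub (integrable_comp_of_exists_abs_le hX hμ1 hμ1b)
      (integrable_comp_of_exists_abs_le hX hμ0 hμ0b),
    integral_sub hY1 hY0,
    integral_comp_eq_integral_of_ignorable hX hAint
      (integrable_mul_sub_comp hX hA hAb hY hYb hμ1 hμ1b) hμ1 hμ1b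
      (mul_observed_eq_mul_treated hA01 hcons) hor1 heX (hoverlap.mono fun _ h => h.1.ne') hig1,
    integral_comp_eq_integral_of_ignorable (e := fun x => 1 - e x) hX
      (h1A.integrable_of_exists_abs_le h1Ab) (integrable_mul_sub_comp hX h1A h1Ab hY hYb hμ0 hμ0b)
      hμ0 hμ0b
      (mul_observed_eq_mul_control hA01 hcons) hor0 heX'
      (hoverlap.mono fun _ h => (sub_pos.2 h.2).ne') hig0]

theorem integral_augmentation_eq [IsProbabilityMeasure μ] (hX : Measurable X)
    {A Y : Ω → ℝ} {μ1 μ0 e π m1 m0 wt : E → ℝ} {ε : ℝ}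
    (hA : Measurable A) (hA01 : ∀ ω, A ω = 0 ∨ A ω = 1)
    (hY : Measurable Y) (hYb : ∃ C, ∀ ω, |Y ω| ≤ C)
    (hμ1 : Measurable μ1) (hμ1b : ∃ C, ∀ x, |μ1 x| ≤ C)
    (hμ0 : Measurable μ0) (hμ0b : ∃ C, ∀ x, |μ0 x| ≤ C)
    (hor1 : μ[fun ω => A ω * (Y ω - μ1 (X ω)) | mE.comap X] =ᵐ[μ] fun _ => 0)
    (hor0 : μ[fun ω => (1 - A ω) * (Y ω - μ0 (X ω)) | mE.comap X] =ᵐ[μ] fun _ => 0)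
    (heX : (fun ω => e (X ω)) =ᵐ[μ] μ[A | mE.comap X])
    (hε : 0 < ε) (hπ : Measurable π) (hπε : ∀ x, ε ≤ π x ∧ π x ≤ 1 - ε)
    (hm1 : Measurable m1) (hm1b : ∃ C, ∀ x, |m1 x| ≤ C)
    (hm0 : Measurable m0) (hm0b : ∃ C, ∀ x, |m0 x| ≤ C)
    (hwt : Measurable wt) (hwtb : ∃ C, ∀ x, |wt x| ≤ C) :
    ∫ ω, wt (X ω) * (A ω * (Y ω - m1 (X ω)) / π (X ω)
        - (1 - A ω) * (Y ω - m0 (X ω)) / (1 - π (X ω))) ∂μ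
      = ∫ ω, wt (X ω) * ((μ1 (X ω) - m1 (X ω)) * e (X ω) / π (X ω)
        - (μ0 (X ω) - m0 (X ω)) * (1 - e (X ω)) / (1 - π (X ω))) ∂μ := by
  have hAb := exists_abs_le_of_binary hA01
  have h1Ab := exists_abs_one_sub_le_of_binary hA01
  have hAint : Integrable A μ := hA.integrable_of_exists_abs_le hAb
  have h1A : Measurable fun ω => 1 - A ω := measurable_const.sub hA
  have h1Aint : Integrable (fun ω => 1 - A ω) μ := h1A.integrable_of_exists_abs_le h1Ab
  have hg1 : Measurable fun x => wt x * (π x)⁻¹ := hwt.mul hπ.inv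
  have hg0 : Measurable fun x => wt x * (1 - π x)⁻¹ := hwt.mul (measurable_const.sub hπ).inv
  have hg1b : ∃ C, ∀ x, |wt x * (π x)⁻¹| ≤ C :=
    exists_abs_le_mul hwtb (exists_abs_inv_le_of_le hε fun x => (hπε x).1)
  have hg0b : ∃ C, ∀ x, |wt x * (1 - π x)⁻¹| ≤ C :=
    exists_abs_le_mul hwtb (exists_abs_inv_le_of_le hε fun x => by linarith [(hπε x).2])
  have hZ1 := integrable_mul_sub_comp (μ := μ) hX hA hAb hY hYb hm1 hm1b
  have hZ0 := integrable_mul_sub_comp (μ := μ) hX h1A h1Ab hY hYb hm0 hm0b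
  have hsplit : (fun ω => wt (X ω) * (A ω * (Y ω - m1 (X ω)) / π (X ω)
        - (1 - A ω) * (Y ω - m0 (X ω)) / (1 - π (X ω))))
      = (fun ω => wt (X ω) * (π (X ω))⁻¹ * (A ω * (Y ω - m1 (X ω))))
        - fun ω => wt (X ω) * (1 - π (X ω))⁻¹ * ((1 - A ω) * (Y ω - m0 (X ω))) := by
    funext ω; simp only [Pi.sub_apply]; ring
  rw [← integral_condExp hX.comap_le]
  refine integral_congr_ae ?_
  filter_upwards [condExp_sub (hZ1.comp_mul_of_exists_abs_le hX hg1 hg1b)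
      (hZ0.comp_mul_of_exists_abs_le hX hg0 hg0b) _,
    condExp_comp_mul_ae_eq hX hg1 hg1b hZ1, condExp_comp_mul_ae_eq hX hg0 hg0b hZ0,
    condExp_mul_sub_comp_ae_eq hX hAint (integrable_mul_sub_comp hX hA hAb hY hYb hμ1 hμ1b)
      hμ1 hμ1b hm1 hm1b hor1,
    condExp_mul_sub_comp_ae_eq hX h1Aint (integrable_mul_sub_comp hX h1A h1Ab hY hYb hμ0 hμ0b)
      hμ0 hμ0b hm0 hm0b hor0,
    condExp_one_sub_ae_eq hX.comap_le hAint, heX] with ω hsub hpull1 hpull0 hbias1 hbias0 hcond1A he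
  rw [hsplit, hsub, Pi.sub_apply, hpull1, hpull0, hbias1, hbias0, hcond1A, ← he]
  ring

theorem integral_sub_add_augmentation_eq_of_propensity_of_density_ratio {ν₁ ν₂ : Measure Ω}
    [IsFiniteMeasure ν₁] (hX : Measurable X) {μ1 μ0 e π m1 m0 wt w : E → ℝ}
    (hw : Measurable w) (hw0 : ∀ x, 0 ≤ w x)
    (hden : ν₁.map X = (ν₂.map X).withDensity fun x => ENNReal.ofReal (w x))
    (hμ1 : Measurable μ1) (hμ1b : ∃ C, ∀ x, |μ1 x| ≤ C)
    (hμ0 : Measurable μ0) (hμ0b : ∃ C, ∀ x, |μ0 x| ≤ C)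
    (hm1 : Measurable m1) (hm1b : ∃ C, ∀ x, |m1 x| ≤ C)
    (hm0 : Measurable m0) (hm0b : ∃ C, ∀ x, |m0 x| ≤ C)
    (hoverlap : ∀ᵐ ω ∂ν₂, 0 < e (X ω) ∧ e (X ω) < 1)
    (hπe : ∀ᵐ x ∂(ν₂.map X), π x = e x) (hwtw : ∀ᵐ x ∂(ν₂.map X), wt x = w x) :
    ∫ ω, (m1 (X ω) - m0 (X ω)) ∂ν₁
      + ∫ ω, wt (X ω) * ((μ1 (X ω) - m1 (X ω)) * e (X ω) / π (X ω)
        - (μ0 (X ω) - m0 (X ω)) * (1 - e (X ω)) / (1 - π (X ω))) ∂ν₂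
      = ∫ ω, (μ1 (X ω) - μ0 (X ω)) ∂ν₁ := by
  have hweight : ∫ ω, wt (X ω) * ((μ1 (X ω) - m1 (X ω)) * e (X ω) / π (X ω)
        - (μ0 (X ω) - m0 (X ω)) * (1 - e (X ω)) / (1 - π (X ω))) ∂ν₂
      = ∫ ω, w (X ω) * (μ1 (X ω) - m1 (X ω) - (μ0 (X ω) - m0 (X ω))) ∂ν₂ := by
    refine integral_congr_ae ?_
    filter_upwards [hoverlap, ae_of_ae_map hX.aemeasurable hπe,
      ae_of_ae_map hX.aemeasurable hwtw] with ω he hπ hwt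
    have he1 : 1 - e (X ω) ≠ 0 := (sub_pos.2 he.2).ne'
    rw [hπ, hwt]
    field_simp [he.1.ne']
  rw [hweight, ← integral_comp_eq_integral_mul_of_map_eq_withDensity
      (f := fun x => μ1 x - m1 x - (μ0 x - m0 x)) hX hw hw0 hden
      ((hμ1.sub hm1).sub (hμ0.sub hm0)),
    ← integral_add
      (integrable_comp_of_exists_abs_le (g := fun x => m1 x - m0 x) hX (hm1.sub hm0)
        (exists_abs_le_sub hm1b hm0b))
      (integrable_comp_of_exists_abs_le (g := fun x => μ1 x - m1 x - (μ0 x - m0 x)) hX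
        ((hμ1.sub hm1).sub (hμ0.sub hm0))
        (exists_abs_le_sub (exists_abs_le_sub hμ1b hm1b) (exists_abs_le_sub hμ0b hm0b)))]
  congr 1
  funext ω
  ring

end CondExpGivenX

theorem source_site_density_ratio_double_robustness_general
    {Ω : Type*} [MeasurableSpace Ω] (P : Measure Ω) [IsProbabilityMeasure P]
    {p : ℕ} (X : Ω → (Fin p → ℝ)) (A : Ω → ℝ) (Y1 Y0 Y : Ω → ℝ)
    {S : Type*}
    (R : Ω → S) (T : Finset S) (k : S)
    (μ1T μ0T eT ek μ1k μ0k w π m1 m0 wt : (Fin p → ℝ) → ℝ) (ε : ℝ)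
    (hX : Measurable X) (hA : Measurable A) (hA01 : ∀ ω, A ω = 0 ∨ A ω = 1)
    (hY1 : Measurable Y1) (hY0 : Measurable Y0)
    (hY1b : ∃ C, ∀ ω, |Y1 ω| ≤ C) (hY0b : ∃ C, ∀ ω, |Y0 ω| ≤ C)
    (hcons : ∀ ω, Y ω = A ω * Y1 ω + (1 - A ω) * Y0 ω)
    (hPT : P {ω | R ω ∈ T} ≠ 0) (hPk : P {ω | R ω = k} ≠ 0)
    (hε : 0 < ε)
    -- target population models
    (hμ1T : Measurable μ1T) (hμ0T : Measurable μ0T)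
    (hμ1Tb : ∃ C, ∀ x, |μ1T x| ≤ C) (hμ0Tb : ∃ C, ∀ x, |μ0T x| ≤ C)
    (horT1 : (P[|{ω | R ω ∈ T}])[fun ω => A ω * (Y ω - μ1T (X ω)) |
        MeasurableSpace.comap X inferInstance] =ᵐ[P[|{ω | R ω ∈ T}]] fun _ => (0 : ℝ))
    (horT0 : (P[|{ω | R ω ∈ T}])[fun ω => (1 - A ω) * (Y ω - μ0T (X ω)) |
        MeasurableSpace.comap X inferInstance] =ᵐ[P[|{ω | R ω ∈ T}]] fun _ => (0 : ℝ))
    (heTX : (fun ω => eT (X ω))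
      =ᵐ[P[|{ω | R ω ∈ T}]] (P[|{ω | R ω ∈ T}])[A | MeasurableSpace.comap X inferInstance])
    (heTpos : ∀ᵐ ω ∂(P[|{ω | R ω ∈ T}]), ε ≤ eT (X ω) ∧ eT (X ω) ≤ 1 - ε)
    (higT1 : (P[|{ω | R ω ∈ T}])[fun ω => A ω * Y1 ω | MeasurableSpace.comap X inferInstance]
      =ᵐ[P[|{ω | R ω ∈ T}]] fun ω => eT (X ω) *
        ((P[|{ω | R ω ∈ T}])[Y1 | MeasurableSpace.comap X inferInstance]) ω)
    (higT0 : (P[|{ω | R ω ∈ T}])[fun ω => (1 - A ω) * Y0 ω |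
        MeasurableSpace.comap X inferInstance]
      =ᵐ[P[|{ω | R ω ∈ T}]] fun ω => (1 - eT (X ω)) *
        ((P[|{ω | R ω ∈ T}])[Y0 | MeasurableSpace.comap X inferInstance]) ω)
    -- source site models
    (hekX : (fun ω => ek (X ω))
      =ᵐ[P[|{ω | R ω = k}]] (P[|{ω | R ω = k}])[A | MeasurableSpace.comap X inferInstance])
    (hekpos : ∀ᵐ ω ∂(P[|{ω | R ω = k}]), ε ≤ ek (X ω) ∧ ek (X ω) ≤ 1 - ε)
    (hμ1k : Measurable μ1k) (hμ0k : Measurable μ0k)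
    (hμ1kb : ∃ C, ∀ x, |μ1k x| ≤ C) (hμ0kb : ∃ C, ∀ x, |μ0k x| ≤ C)
    (hork1 : (P[|{ω | R ω = k}])[fun ω => A ω * (Y ω - μ1k (X ω)) |
        MeasurableSpace.comap X inferInstance] =ᵐ[P[|{ω | R ω = k}]] fun _ => (0 : ℝ))
    (hork0 : (P[|{ω | R ω = k}])[fun ω => (1 - A ω) * (Y ω - μ0k (X ω)) |
        MeasurableSpace.comap X inferInstance] =ᵐ[P[|{ω | R ω = k}]] fun _ => (0 : ℝ))
    -- true density ratio
    (hw : Measurable w) (hw0 : ∀ x, 0 ≤ w x)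
    (hden : Measure.map X (P[|{ω | R ω ∈ T}])
      = (Measure.map X (P[|{ω | R ω = k}])).withDensity fun x => ENNReal.ofReal (w x))
    -- working models
    (hπ : Measurable π) (hπpos : ∀ x, ε ≤ π x ∧ π x ≤ 1 - ε)
    (hm1 : Measurable m1) (hm0 : Measurable m0)
    (hm1b : ∃ C, ∀ x, |m1 x| ≤ C) (hm0b : ∃ C, ∀ x, |m0 x| ≤ C)
    (hwt : Measurable wt) (hwt0 : ∀ x, 0 ≤ wt x) (hwtb : ∃ C, ∀ x, wt x ≤ C)
    -- double robustness: (1) outcome regressions correct for target and source, or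
    -- (2) propensity score and density ratio correct for the source site, with the
    -- outcome regression shared across sites
    (hdr : ((∀ᵐ x ∂(Measure.map X (P[|{ω | R ω ∈ T}])), m1 x = μ1T x)
          ∧ (∀ᵐ x ∂(Measure.map X (P[|{ω | R ω ∈ T}])), m0 x = μ0T x)
          ∧ (∀ᵐ x ∂(Measure.map X (P[|{ω | R ω = k}])), m1 x = μ1k x)
          ∧ (∀ᵐ x ∂(Measure.map X (P[|{ω | R ω = k}])), m0 x = μ0k x))
      ∨ ((∀ᵐ x ∂(Measure.map X (P[|{ω | R ω = k}])), π x = ek x)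
          ∧ (∀ᵐ x ∂(Measure.map X (P[|{ω | R ω = k}])), wt x = w x)
          ∧ (∀ᵐ x ∂(Measure.map X (P[|{ω | R ω ∈ T}])), μ1k x = μ1T x)
          ∧ (∀ᵐ x ∂(Measure.map X (P[|{ω | R ω ∈ T}])), μ0k x = μ0T x))) :
    (∫ ω, (m1 (X ω) - m0 (X ω)) ∂(P[|{ω | R ω ∈ T}]))
      + ∫ ω, wt (X ω) * (A ω * (Y ω - m1 (X ω)) / π (X ω)
          - (1 - A ω) * (Y ω - m0 (X ω)) / (1 - π (X ω))) ∂(P[|{ω | R ω = k}])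
      = ∫ ω, (Y1 ω - Y0 ω) ∂(P[|{ω | R ω ∈ T}]) := by
  have := cond_isProbabilityMeasure (μ := P) hPT
  have := cond_isProbabilityMeasure (μ := P) hPk
  have hY := measurable_of_consistency hA hY1 hY0 hcons
  have hYb := exists_abs_le_of_consistency hA01 hY1b hY0b hcons
  have hoverlap {ν : Measure Ω} {e : (Fin p → ℝ) → ℝ}
      (he : ∀ᵐ ω ∂ν, ε ≤ e (X ω) ∧ e (X ω) ≤ 1 - ε) : ∀ᵐ ω ∂ν, 0 < e (X ω) ∧ e (X ω) < 1 :=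
    he.mono fun _ h => ⟨hε.trans_le h.1, by linarith [h.2]⟩
  rw [integral_augmentation_eq hX hA hA01 hY hYb hμ1k hμ1kb hμ0k hμ0kb hork1 hork0 hekX hε hπ
      hπpos hm1 hm1b hm0 hm0b hwt (hwtb.imp fun _ h x => (abs_of_nonneg (hwt0 x)).trans_le (h x)),
    ← integral_regression_sub_eq_integral_sub hX hA hA01
      (hY1.integrable_of_exists_abs_le hY1b) (hY0.integrable_of_exists_abs_le hY0b) hY hYb hcons
      hμ1T hμ1Tb hμ0T hμ0Tb horT1 horT0 heTX (hoverlap heTpos) higT1 higT0]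
  rcases hdr with ⟨h1T, h0T, h1k, h0k⟩ | ⟨hπk, hwtk, h1Tk, h0Tk⟩
  · rw [add_eq_left.2 (integral_eq_zero_of_ae ?_)]
    · refine integral_congr_ae ?_
      filter_upwards [ae_of_ae_map hX.aemeasurable h1T, ae_of_ae_map hX.aemeasurable h0T]
        with ω h1 h0
      rw [h1, h0]
    · filter_upwards [ae_of_ae_map hX.aemeasurable h1k, ae_of_ae_map hX.aemeasurable h0k]
        with ω h1 h0
      simp [h1, h0]
  · rw [integral_sub_add_augmentation_eq_of_propensity_of_density_ratio hX hw hw0 hden hμ1k hμ1kb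
      hμ0k hμ0kb hm1 hm1b hm0 hm0b (hoverlap hekpos) hπk hwtk]
    refine integral_congr_ae ?_
    filter_upwards [ae_of_ae_map hX.aemeasurable h1Tk, ae_of_ae_map hX.aemeasurable h0Tk]
      with ω h1 h0
    rw [h1, h0]

/-- **Double robustness of the source-site density-ratio-weighted estimator.**
Let `Φ = E_T[m₁(X) − m₀(X)] + E_k[ω̃(X)·(A(Y−m₁(X))/π(X) − (1−A)(Y−m₀(X))/(1−π(X)))]`.
Then `Φ = E[Y¹ − Y⁰ ∣ R ∈ T]` provided either (1) the outcome regression is correct for the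
target population and the source site, or (2) the propensity score and density ratio are
correct for the source site while the outcome regression is shared across sites. -/
theorem source_site_density_ratio_double_robustness
    {Ω : Type*} [MeasurableSpace Ω] (P : Measure Ω) [IsProbabilityMeasure P]
    {p : ℕ} (X : Ω → (Fin p → ℝ)) (A : Ω → ℝ) (Y1 Y0 Y : Ω → ℝ)
    {S : Type*} [Fintype S] [MeasurableSpace S] [MeasurableSingletonClass S]
    (R : Ω → S) (T : Finset S) (k : S)
    (μ1T μ0T eT ek μ1k μ0k w π m1 m0 wt : (Fin p → ℝ) → ℝ) (ε : ℝ)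
    (hX : Measurable X) (hA : Measurable A) (hA01 : ∀ ω, A ω = 0 ∨ A ω = 1)
    (hY1 : Measurable Y1) (hY0 : Measurable Y0)
    (hY1b : ∃ C, ∀ ω, |Y1 ω| ≤ C) (hY0b : ∃ C, ∀ ω, |Y0 ω| ≤ C)
    (hcons : ∀ ω, Y ω = A ω * Y1 ω + (1 - A ω) * Y0 ω)
    (hR : Measurable R) (hkT : k ∉ T)
    (hPT : P {ω | R ω ∈ T} ≠ 0) (hPk : P {ω | R ω = k} ≠ 0)
    (hε : 0 < ε) (hε' : ε < 1 / 2)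
    -- target population models
    (hμ1T : Measurable μ1T) (hμ0T : Measurable μ0T)
    (hμ1Tb : ∃ C, ∀ x, |μ1T x| ≤ C) (hμ0Tb : ∃ C, ∀ x, |μ0T x| ≤ C)
    (horT1 : (P[|{ω | R ω ∈ T}])[fun ω => A ω * (Y ω - μ1T (X ω)) |
        MeasurableSpace.comap X inferInstance] =ᵐ[P[|{ω | R ω ∈ T}]] fun _ => (0 : ℝ))
    (horT0 : (P[|{ω | R ω ∈ T}])[fun ω => (1 - A ω) * (Y ω - μ0T (X ω)) |
        MeasurableSpace.comap X inferInstance] =ᵐ[P[|{ω | R ω ∈ T}]] fun _ => (0 : ℝ))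
    (heT : Measurable eT)
    (heTX : (fun ω => eT (X ω))
      =ᵐ[P[|{ω | R ω ∈ T}]] (P[|{ω | R ω ∈ T}])[A | MeasurableSpace.comap X inferInstance])
    (heTpos : ∀ᵐ ω ∂(P[|{ω | R ω ∈ T}]), ε ≤ eT (X ω) ∧ eT (X ω) ≤ 1 - ε)
    (higT1 : (P[|{ω | R ω ∈ T}])[fun ω => A ω * Y1 ω | MeasurableSpace.comap X inferInstance]
      =ᵐ[P[|{ω | R ω ∈ T}]] fun ω => eT (X ω) *
        ((P[|{ω | R ω ∈ T}])[Y1 | MeasurableSpace.comap X inferInstance]) ω)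
    (higT0 : (P[|{ω | R ω ∈ T}])[fun ω => (1 - A ω) * Y0 ω |
        MeasurableSpace.comap X inferInstance]
      =ᵐ[P[|{ω | R ω ∈ T}]] fun ω => (1 - eT (X ω)) *
        ((P[|{ω | R ω ∈ T}])[Y0 | MeasurableSpace.comap X inferInstance]) ω)
    -- source site models
    (hek : Measurable ek)
    (hekX : (fun ω => ek (X ω))
      =ᵐ[P[|{ω | R ω = k}]] (P[|{ω | R ω = k}])[A | MeasurableSpace.comap X inferInstance])
    (hekpos : ∀ᵐ ω ∂(P[|{ω | R ω = k}]), ε ≤ ek (X ω) ∧ ek (X ω) ≤ 1 - ε)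
    (hμ1k : Measurable μ1k) (hμ0k : Measurable μ0k)
    (hμ1kb : ∃ C, ∀ x, |μ1k x| ≤ C) (hμ0kb : ∃ C, ∀ x, |μ0k x| ≤ C)
    (hork1 : (P[|{ω | R ω = k}])[fun ω => A ω * (Y ω - μ1k (X ω)) |
        MeasurableSpace.comap X inferInstance] =ᵐ[P[|{ω | R ω = k}]] fun _ => (0 : ℝ))
    (hork0 : (P[|{ω | R ω = k}])[fun ω => (1 - A ω) * (Y ω - μ0k (X ω)) |
        MeasurableSpace.comap X inferInstance] =ᵐ[P[|{ω | R ω = k}]] fun _ => (0 : ℝ))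
    -- true density ratio
    (hw : Measurable w) (hw0 : ∀ x, 0 ≤ w x) (hwb : ∃ C, ∀ x, w x ≤ C)
    (hden : Measure.map X (P[|{ω | R ω ∈ T}])
      = (Measure.map X (P[|{ω | R ω = k}])).withDensity fun x => ENNReal.ofReal (w x))
    -- working models
    (hπ : Measurable π) (hπpos : ∀ x, ε ≤ π x ∧ π x ≤ 1 - ε)
    (hm1 : Measurable m1) (hm0 : Measurable m0)
    (hm1b : ∃ C, ∀ x, |m1 x| ≤ C) (hm0b : ∃ C, ∀ x, |m0 x| ≤ C)
    (hwt : Measurable wt) (hwt0 : ∀ x, 0 ≤ wt x) (hwtb : ∃ C, ∀ x, wt x ≤ C)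
    -- double robustness: (1) outcome regressions correct for target and source, or
    -- (2) propensity score and density ratio correct for the source site, with the
    -- outcome regression shared across sites
    (hdr : ((∀ᵐ x ∂(Measure.map X (P[|{ω | R ω ∈ T}])), m1 x = μ1T x)
          ∧ (∀ᵐ x ∂(Measure.map X (P[|{ω | R ω ∈ T}])), m0 x = μ0T x)
          ∧ (∀ᵐ x ∂(Measure.map X (P[|{ω | R ω = k}])), m1 x = μ1k x)
          ∧ (∀ᵐ x ∂(Measure.map X (P[|{ω | R ω = k}])), m0 x = μ0k x))
      ∨ ((∀ᵐ x ∂(Measure.map X (P[|{ω | R ω = k}])), π x = ek x)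
          ∧ (∀ᵐ x ∂(Measure.map X (P[|{ω | R ω = k}])), wt x = w x)
          ∧ (∀ᵐ x ∂(Measure.map X (P[|{ω | R ω ∈ T}])), μ1k x = μ1T x)
          ∧ (∀ᵐ x ∂(Measure.map X (P[|{ω | R ω ∈ T}])), μ0k x = μ0T x))) :
    (∫ ω, (m1 (X ω) - m0 (X ω)) ∂(P[|{ω | R ω ∈ T}]))
      + ∫ ω, wt (X ω) * (A ω * (Y ω - m1 (X ω)) / π (X ω)
          - (1 - A ω) * (Y ω - m0 (X ω)) / (1 - π (X ω))) ∂(P[|{ω | R ω = k}])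
      = ∫ ω, (Y1 ω - Y0 ω) ∂(P[|{ω | R ω ∈ T}]) :=
  source_site_density_ratio_double_robustness_general P X A Y1 Y0 Y R T k μ1T μ0T eT ek μ1k μ0k w π
    m1 m0 wt ε hX hA hA01 hY1 hY0 hY1b hY0b hcons hPT hPk hε hμ1T hμ0T hμ1Tb hμ0Tb horT1 horT0 heTX
    heTpos higT1 higT0 hekX hekpos hμ1k hμ0k hμ1kb hμ0kb hork1 hork0 hw hw0 hden hπ hπpos hm1 hm0
    hm1b hm0b hwt hwt0 hwtb hdr
end
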